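/- arXiv:2208.08810 — 6 statements merged into one kernel-verified Lean document; each statement's English description precedes it below -/
import Mathlib

section
/- For any measure function h, the dyadic Hausdorff content M_{h,d} is continuous along increasing unions: if A_n is an increasing sequence of subsets of 𝕋 with union A = ∪_n A_n, then M_{h,d}(A) = lim_{n→∞} M_{h,d}(A_n). -/
open MeasureTheory Set Filter Topology
open scoped ENNReal

noncomputable section

/-- The unit circle `𝕋` as a subset of `ℂ`. -/
def unitCircleSet : Set ℂ := Metric.sphere 0 1

/-- The normalized arclength (Lebesgue) measure `m` on the unit circle `𝕋`,
viewed as a Borel measure on `ℂ`, normalized so that `m(𝕋) = 1`. -/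
def mC : Measure ℂ :=
  (ENNReal.ofReal (2 * Real.pi))⁻¹ •
    Measure.map (circleMap 0 1) (volume.restrict (Set.Ioc 0 (2 * Real.pi)))

/-- An open arc of the unit circle. -/
def IsOpenArc (A : Set ℂ) : Prop :=
  ∃ a b : ℝ, a < b ∧ b - a ≤ 2 * Real.pi ∧ A = circleMap 0 1 '' Set.Ioo a b

/-- A closed arc of the unit circle. -/
def IsClosedArc (A : Set ℂ) : Prop :=
  ∃ a b : ℝ, a < b ∧ b - a ≤ 2 * Real.pi ∧ A = circleMap 0 1 '' Set.Icc a b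

/-- The dyadic arcs `d_{n,j} = { e^{it} : t ∈ [2π 2⁻ⁿ j, 2π 2⁻ⁿ (j+1)] }`. -/
def IsDyadicArc (A : Set ℂ) : Prop :=
  ∃ n j : ℕ, j < 2 ^ n ∧
    A = circleMap 0 1 ''
      Set.Icc (2 * Real.pi * j / 2 ^ n) (2 * Real.pi * (j + 1) / 2 ^ n)

/-- A measure function: an increasing continuous function `h` with `h 0 = 0`, such that
`t ↦ h t / t` is decreasing and tends to `+∞` as `t → 0⁺`. -/
structure IsMeasureFunction (h : ℝ → ℝ) : Prop where
  continuousOn : ContinuousOn h (Set.Ici 0)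
  monotoneOn : MonotoneOn h (Set.Ici 0)
  map_zero : h 0 = 0
  antitoneOn : AntitoneOn (fun t => h t / t) (Set.Ioi 0)
  tendsto_atTop : Filter.Tendsto (fun t => h t / t) (nhdsWithin 0 (Set.Ioi 0)) Filter.atTop

/-- The Hausdorff content `M_h(E)`: the infimum of `Σ_{ℓ ∈ L} h(|ℓ|)` over countable
covers `L` of `E` by open arcs of the circle. -/
def hausdorffContent (h : ℝ → ℝ) (E : Set ℂ) : ℝ≥0∞ :=
  ⨅ (L : Set (Set ℂ)) (_ : L.Countable) (_ : ∀ ℓ ∈ L, IsOpenArc ℓ)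
    (_ : E ⊆ ⋃₀ L), ∑' ℓ : L, ENNReal.ofReal (h (mC ↑ℓ).toReal)

/-- The dyadic Hausdorff content `M_{h,d}(E)`: as `M_h(E)` but with covers by dyadic arcs. -/
def dyadicContent (h : ℝ → ℝ) (E : Set ℂ) : ℝ≥0∞ :=
  ⨅ (L : Set (Set ℂ)) (_ : L.Countable) (_ : ∀ d ∈ L, IsDyadicArc d)
    (_ : E ⊆ ⋃₀ L), ∑' d : L, ENNReal.ofReal (h (mC ↑d).toReal)

/-- The small Hausdorff content `M⁰_h(E)`: as `M_h(E)`, but the cover is only required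
to cover `E` up to a set of Lebesgue measure zero. -/
def hausdorffContent0 (h : ℝ → ℝ) (E : Set ℂ) : ℝ≥0∞ :=
  ⨅ (L : Set (Set ℂ)) (_ : L.Countable) (_ : ∀ ℓ ∈ L, IsOpenArc ℓ)
    (_ : mC (E \ ⋃₀ L) = 0), ∑' ℓ : L, ENNReal.ofReal (h (mC ↑ℓ).toReal)

/-- The small dyadic Hausdorff content `M⁰_{h,d}(E)`. -/
def dyadicContent0 (h : ℝ → ℝ) (E : Set ℂ) : ℝ≥0∞ :=
  ⨅ (L : Set (Set ℂ)) (_ : L.Countable) (_ : ∀ d ∈ L, IsDyadicArc d)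
    (_ : mC (E \ ⋃₀ L) = 0), ∑' d : L, ENNReal.ofReal (h (mC ↑d).toReal)

/-- An `h`-Carleson set: a closed subset `A` of the circle whose complement `𝕋 \ A`
is a countable union `⋃ L` of open arcs with `Σ_{ℓ ∈ L} h(|ℓ|) < ∞`.  (For nonempty `A`
this is equivalent to the usual definition via the decomposition of `𝕋 \ A` into its
connected components, i.e. into countably many pairwise disjoint open arcs, by
subadditivity of `h`.) -/
def IsHCarleson (h : ℝ → ℝ) (A : Set ℂ) : Prop :=
  A ⊆ unitCircleSet ∧ IsClosed A ∧
    ∃ L : Set (Set ℂ), L.Countable ∧ (∀ ℓ ∈ L, IsOpenArc ℓ) ∧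
      unitCircleSet \ A = ⋃₀ L ∧
      ∑' ℓ : L, ENNReal.ofReal (h (mC ↑ℓ).toReal) ≠ ⊤

/-- `(core, res)` is a core-residual decomposition of `E` with respect to `h`:
`core` and `res` are disjoint measurable sets with `E = (res ∪ core) \ N` for some
Lebesgue-null set `N`; every `h`-Carleson set almost contained in `E` is almost
contained in `core`; and `core` is, up to a null set, a countable union of
`h`-Carleson sets almost contained in `E`. -/
def IsCoreResidualDecomp (h : ℝ → ℝ) (E core res : Set ℂ) : Prop :=
  MeasurableSet core ∧ MeasurableSet res ∧ Disjoint core res ∧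
    (∃ N : Set ℂ, mC N = 0 ∧ E = (res ∪ core) \ N) ∧
    (∀ A : Set ℂ, IsHCarleson h A → mC (A \ E) = 0 → mC (A \ core) = 0) ∧
    (∃ G : ℕ → Set ℂ, (∀ n, IsHCarleson h (G n) ∧ mC (G n \ E) = 0) ∧
      mC ((core \ ⋃ n, G n) ∪ ((⋃ n, G n) \ core)) = 0)

/-- The measure function `h(t) = t log(e/t)` defining Beurling-Carleson sets. -/
def hBC : ℝ → ℝ := fun t => t * Real.log (Real.exp 1 / t)

/-- A Beurling-Carleson set. -/
def IsBeurlingCarleson (A : Set ℂ) : Prop := IsHCarleson hBC A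

/-
Rogers' increasing sets lemma, for contents built from covers by members of a family `N` in which
every member has finitely many supersets and any two members meeting outside a null set `Z` are
nested. Take covers `L n` of `A n` of cost at most `M(A n) + η n` and merge them greedily, `C (n+1)`
being the maximal members of `C n ∪ L (n+1)`. Off `Z`, the members of `C n ∪ L (n+1)` lying below
a member of the other family cover `A n`, and no member is both maximal and such unless it lies in
both families; hence `cost C (n+1) + M(A n) ≤ cost C n + cost L (n+1)`, so that
`cost C n ≤ M(A n) + Σ η`. The members that eventually stay in `C n` cover `⋃ A n` at cost at most
`sup cost C n`. For dyadic arcs `Z` is the countable set of dyadic endpoints, null because `h` is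
continuous at `0` with `h 0 = 0`.
-/

lemma tsum_union_add_tsum_inter {α : Type*} (w : α → ℝ≥0∞) (s t : Set α) :
    ∑' x : ↥(s ∪ t), w x + ∑' x : ↥(s ∩ t), w x = ∑' x : s, w x + ∑' x : t, w x := by
  simp only [tsum_subtype, ← ENNReal.tsum_add, indicator_union_add_inter_apply]

lemma tsum_setOf_eventually_mem_le_iSup {α : Type*} (w : α → ℝ≥0∞) (C : ℕ → Set α) :
    ∑' x : {x | ∀ᶠ n in atTop, x ∈ C n}, w x ≤ ⨆ n, ∑' x : C n, w x := by
  rw [tsum_subtype]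
  refine tsum_le_of_sum_le' zero_le fun F => ?_
  have hF : ∀ᶠ n in atTop, ∀ x ∈ F, x ∈ {x | ∀ᶠ n in atTop, x ∈ C n} → x ∈ C n :=
    (eventually_all_finset F).2 fun _ _ => eventually_imp_distrib_left.2 id
  obtain ⟨n, hn⟩ := hF.exists
  calc ∑ x ∈ F, {x | ∀ᶠ n in atTop, x ∈ C n}.indicator w x
      ≤ ∑ x ∈ F, (C n).indicator w x :=
        Finset.sum_le_sum fun x hx =>
          indicator_apply_le' (fun hxS => (indicator_of_mem (hn x hx hxS) w).ge) fun _ => zero_le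
    _ ≤ ∑' x, (C n).indicator w x := ENNReal.sum_le_tsum F
    _ = ∑' x : C n, w x := (tsum_subtype _ _).symm
    _ ≤ ⨆ n, ∑' x : C n, w x := le_iSup (fun n => ∑' x : C n, w x) n

section Order

variable {α : Type*}

lemma exists_le_maximal_of_finite_ancestors [Preorder α] {S T : Set α} {d : α}
    (hfin : ∀ d ∈ S, {q ∈ S | d ≤ q}.Finite) (hTS : T ⊆ S) (hd : d ∈ T) :
    ∃ q, d ≤ q ∧ Maximal (· ∈ T) q := by
  have hfinT : {q ∈ T | d ≤ q}.Finite :=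
    (hfin d (hTS hd)).subset fun q hq => ⟨hTS hq.1, hq.2⟩
  obtain ⟨q, hdq, hq⟩ := hfinT.exists_le_maximal ⟨hd, le_rfl⟩
  exact ⟨q, hdq, hq.1.1, fun y hy hqy => hq.2 ⟨hy, hdq.trans hqy⟩ hqy⟩

/-- The members of `U ∪ V` lying below a member of the other family (strictly, for members of
`U`, so that a common member is counted once). -/
def subsumedPart [Preorder α] (U V : Set α) : Set α :=
  {d ∈ U | ∃ v ∈ V, d < v} ∪ {d ∈ V | ∃ u ∈ U, d ≤ u}

lemma subsumedPart_subset [Preorder α] {U V : Set α} : subsumedPart U V ⊆ U ∪ V :=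
  union_subset_union (sep_subset _ _) (sep_subset _ _)

lemma maximal_inter_subsumedPart_subset [PartialOrder α] (U V : Set α) :
    {d | Maximal (· ∈ U ∪ V) d} ∩ subsumedPart U V ⊆ U ∩ V := by
  rintro d ⟨hd, ⟨hdU, v, hv, hdv⟩ | ⟨hdV, u, hu, hdu⟩⟩
  · exact absurd (hd.2 (Or.inr hv) hdv.le) hdv.not_ge
  · obtain rfl : d = u := le_antisymm hdu (hd.2 (Or.inl hu) hdu)
    exact ⟨hu, hdV⟩

lemma tsum_maximal_add_tsum_subsumedPart_le [PartialOrder α] (w : α → ℝ≥0∞) (U V : Set α) :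
    ∑' d : {d | Maximal (· ∈ U ∪ V) d}, w d + ∑' d : subsumedPart U V, w d ≤
      ∑' d : U, w d + ∑' d : V, w d := by
  rw [← tsum_union_add_tsum_inter, ← tsum_union_add_tsum_inter w U V]
  exact add_le_add
    (ENNReal.tsum_mono_subtype w (union_subset (fun _ hd => hd.1) subsumedPart_subset))
    (ENNReal.tsum_mono_subtype w (maximal_inter_subsumedPart_subset U V))

def maximalMerge [Preorder α] (L : ℕ → Set α) : ℕ → Set α
  | 0 => {d | Maximal (· ∈ L 0) d}
  | n + 1 => {d | Maximal (· ∈ maximalMerge L n ∪ L (n + 1)) d}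

variable [PartialOrder α] {L : ℕ → Set α} {S : Set α}

lemma maximalMerge_subset {n : ℕ} : maximalMerge L n ⊆ ⋃ m, L m := by
  induction n with
  | zero => exact fun d hd => mem_iUnion.2 ⟨0, hd.1⟩
  | succ n ih => exact fun d hd => hd.1.elim (fun h => ih h) fun h => mem_iUnion.2 ⟨n + 1, h⟩

lemma exists_le_mem_maximalMerge (hLS : ∀ n, L n ⊆ S) (hfin : ∀ d ∈ S, {q ∈ S | d ≤ q}.Finite)
    {n : ℕ} {d : α} (hd : d ∈ L n) : ∃ q ∈ maximalMerge L n, d ≤ q := by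
  cases n with
  | zero =>
    obtain ⟨q, hdq, hq⟩ := exists_le_maximal_of_finite_ancestors hfin (hLS 0) hd
    exact ⟨q, hq, hdq⟩
  | succ n =>
    obtain ⟨q, hdq, hq⟩ := exists_le_maximal_of_finite_ancestors hfin
      (union_subset (maximalMerge_subset.trans (iUnion_subset hLS)) (hLS (n + 1))) (Or.inr hd)
    exact ⟨q, hq, hdq⟩

lemma exists_le_mem_maximalMerge_of_le (hLS : ∀ n, L n ⊆ S)
    (hfin : ∀ d ∈ S, {q ∈ S | d ≤ q}.Finite) {m n : ℕ} (hmn : m ≤ n) {d : α}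
    (hd : d ∈ maximalMerge L m) : ∃ q ∈ maximalMerge L n, d ≤ q := by
  induction n, hmn using Nat.le_induction with
  | base => exact ⟨d, hd, le_rfl⟩
  | succ n _ ih =>
    obtain ⟨q, hq, hdq⟩ := ih
    obtain ⟨r, hqr, hr⟩ := exists_le_maximal_of_finite_ancestors hfin
      (union_subset (maximalMerge_subset.trans (iUnion_subset hLS)) (hLS (n + 1))) (Or.inl hq)
    exact ⟨r, hr, hdq.trans hqr⟩

/-- The chain of ancestors of `d` met along `maximalMerge L` is finite, so it stabilises. -/
lemma exists_le_eventually_mem_maximalMerge (hLS : ∀ n, L n ⊆ S)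
    (hfin : ∀ d ∈ S, {q ∈ S | d ≤ q}.Finite) {m : ℕ} {d : α} (hd : d ∈ maximalMerge L m) :
    ∃ q, d ≤ q ∧ ∀ᶠ n in atTop, q ∈ maximalMerge L n := by
  have hCS : ∀ {k}, maximalMerge L k ⊆ S := fun hd => iUnion_subset hLS (maximalMerge_subset hd)
  let P := {q ∈ S | d ≤ q ∧ ∃ k ≥ m, q ∈ maximalMerge L k}
  have hP : P.Finite := (hfin d (hCS hd)).subset fun q hq => ⟨hq.1, hq.2.1⟩
  obtain ⟨q, hdq, hq⟩ := hP.exists_le_maximal (⟨hCS hd, le_rfl, m, le_rfl, hd⟩ : d ∈ P)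
  obtain ⟨k, hkm, hqk⟩ := hq.1.2.2
  refine ⟨q, hdq, eventually_atTop.2 ⟨k, fun n hkn => ?_⟩⟩
  obtain ⟨r, hr, hqr⟩ := exists_le_mem_maximalMerge_of_le hLS hfin hkn hqk
  rwa [le_antisymm hqr (hq.2 ⟨hCS hr, hdq.trans hqr, n, hkm.trans hkn, hr⟩ hqr)]

end Order

section NetContent

variable {X : Type*} {N : Set (Set X)} {w : Set X → ℝ≥0∞} {E F Z : Set X}

def netContent (N : Set (Set X)) (w : Set X → ℝ≥0∞) (E : Set X) : ℝ≥0∞ :=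
  ⨅ (L : Set (Set X)) (_ : L.Countable) (_ : L ⊆ N) (_ : E ⊆ ⋃₀ L), ∑' d : L, w d

def PairwiseNestedOff (N : Set (Set X)) (Z : Set X) : Prop :=
  ∀ u ∈ N, ∀ v ∈ N, ∀ x ∈ u ∩ v, x ∉ Z → u ⊆ v ∨ v ⊆ u

lemma netContent_le_tsum {L : Set (Set X)} (hLc : L.Countable) (hLN : L ⊆ N)
    (hEL : E ⊆ ⋃₀ L) : netContent N w E ≤ ∑' d : L, w d :=
  iInf₂_le_of_le L hLc <| iInf₂_le_of_le hLN hEL le_rfl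

lemma exists_cover_tsum_lt {c : ℝ≥0∞} (h : netContent N w E < c) :
    ∃ L : Set (Set X), L.Countable ∧ L ⊆ N ∧ E ⊆ ⋃₀ L ∧ ∑' d : L, w d < c := by
  simpa only [netContent, iInf_lt_iff, exists_prop] using h

lemma netContent_mono (hEF : E ⊆ F) : netContent N w E ≤ netContent N w F :=
  le_iInf₂ fun _ hLc => le_iInf₂ fun hLN hFL => netContent_le_tsum hLc hLN (hEF.trans hFL)

lemma netContent_union_le : netContent N w (E ∪ F) ≤ netContent N w E + netContent N w F := by
  refine ENNReal.le_of_forall_pos_le_add fun ε hε hlt => ?_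
  have hε2 : (ε / 2 : ℝ≥0∞) ≠ 0 := (ENNReal.half_pos (ENNReal.coe_ne_zero.2 hε.ne')).ne'
  obtain ⟨hE, hF⟩ := ENNReal.add_lt_top.1 hlt
  obtain ⟨L, hLc, hLN, hEL, hL⟩ := exists_cover_tsum_lt (ENNReal.lt_add_right hE.ne hε2)
  obtain ⟨L', hL'c, hL'N, hFL', hL'⟩ := exists_cover_tsum_lt (ENNReal.lt_add_right hF.ne hε2)
  calc netContent N w (E ∪ F) ≤ ∑' d : ↥(L ∪ L'), w d :=
        netContent_le_tsum (hLc.union hL'c) (union_subset hLN hL'N)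
          (sUnion_union L L' ▸ union_subset_union hEL hFL')
    _ ≤ ∑' d : L, w d + ∑' d : L', w d := ENNReal.tsum_union_le w L L'
    _ ≤ (netContent N w E + ε / 2) + (netContent N w F + ε / 2) := add_le_add hL.le hL'.le
    _ = netContent N w E + netContent N w F + ε := by rw [add_add_add_comm, ENNReal.add_halves]

lemma netContent_diff_null (hZ : netContent N w Z = 0) (E : Set X) :
    netContent N w (E \ Z) = netContent N w E := by
  refine le_antisymm (netContent_mono sdiff_subset) ?_
  calc netContent N w E ≤ netContent N w (E \ Z ∪ Z) := netContent_mono (subset_sdiff_union E Z)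
    _ ≤ netContent N w (E \ Z) + netContent N w Z := netContent_union_le
    _ = netContent N w (E \ Z) := by rw [hZ, add_zero]

lemma netContent_eq_zero_of_countable (hZ : Z.Countable)
    (hsmall : ∀ x ∈ Z, ∀ ε : ℝ≥0∞, 0 < ε → ∃ d ∈ N, x ∈ d ∧ w d < ε) :
    netContent N w Z = 0 := by
  refine le_antisymm (ENNReal.le_of_forall_pos_le_add fun ε hε _ => ?_) zero_le
  have : Countable Z := hZ.to_subtype
  obtain ⟨δ, hδ, hδε⟩ := ENNReal.exists_pos_sum_of_countable' (ENNReal.coe_ne_zero.2 hε.ne') Z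
  choose d hdN hxd hdδ using fun x : Z => hsmall x x.2 (δ x) (hδ x)
  calc netContent N w Z ≤ ∑' q : range d, w q :=
        netContent_le_tsum (countable_range d) (range_subset_iff.2 hdN)
          fun x hx => mem_sUnion.2 ⟨d ⟨x, hx⟩, mem_range_self _, hxd _⟩
    _ ≤ ∑' x : Z, w (d x) := ENNReal.tsum_le_tsum_comp_of_surjective rangeFactorization_surjective _
    _ ≤ ∑' x : Z, δ x := ENNReal.tsum_le_tsum fun x => (hdδ x).le
    _ ≤ 0 + ε := by rw [zero_add]; exact hδε.le

lemma diff_subset_sUnion_subsumedPart {U V : Set (Set X)}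
    (hnest : ∀ u ∈ U, ∀ v ∈ V, ∀ x ∈ u ∩ v, x ∉ Z → u ⊆ v ∨ v ⊆ u) :
    (⋃₀ U ∩ ⋃₀ V) \ Z ⊆ ⋃₀ subsumedPart U V := by
  rintro x ⟨⟨⟨u, hu, hxu⟩, ⟨v, hv, hxv⟩⟩, hxZ⟩
  rcases hnest u hu v hv x ⟨hxu, hxv⟩ hxZ with huv | hvu
  · rcases huv.eq_or_ssubset with rfl | huv
    · exact ⟨u, Or.inr ⟨hv, u, hu, subset_rfl⟩, hxu⟩
    · exact ⟨u, Or.inl ⟨hu, v, hv, huv⟩, hxu⟩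
  · exact ⟨v, Or.inr ⟨hv, u, hu, hvu⟩, hxv⟩

lemma netContent_add_tsum_maximal_le {U V : Set (Set X)} (hnest : PairwiseNestedOff N Z)
    (hZ : netContent N w Z = 0) (hUc : U.Countable) (hVc : V.Countable) (hUN : U ⊆ N)
    (hVN : V ⊆ N) (hEU : E ⊆ ⋃₀ U) (hEV : E ⊆ ⋃₀ V) :
    netContent N w E + ∑' d : {d | Maximal (· ∈ U ∪ V) d}, w d ≤
      ∑' d : U, w d + ∑' d : V, w d := by
  have hcover : E \ Z ⊆ ⋃₀ subsumedPart U V :=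
    (sdiff_subset_sdiff_left (subset_inter hEU hEV)).trans
      (diff_subset_sUnion_subsumedPart fun u hu v hv => hnest u (hUN hu) v (hVN hv))
  calc netContent N w E + ∑' d : {d | Maximal (· ∈ U ∪ V) d}, w d
      = ∑' d : {d | Maximal (· ∈ U ∪ V) d}, w d + netContent N w (E \ Z) := by
        rw [netContent_diff_null hZ, add_comm]
    _ ≤ ∑' d : {d | Maximal (· ∈ U ∪ V) d}, w d + ∑' d : subsumedPart U V, w d :=
        add_le_add le_rfl (netContent_le_tsum ((hUc.union hVc).mono subsumedPart_subset)
          (subsumedPart_subset.trans (union_subset hUN hVN)) hcover)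
    _ ≤ ∑' d : U, w d + ∑' d : V, w d := tsum_maximal_add_tsum_subsumedPart_le w U V

variable {A : ℕ → Set X} {L : ℕ → Set (Set X)}

lemma tsum_maximalMerge_add_sum_netContent_le (hfin : ∀ d ∈ N, {q ∈ N | d ⊆ q}.Finite)
    (hnest : PairwiseNestedOff N Z) (hZ : netContent N w Z = 0) (hA : Monotone A)
    (hLc : ∀ n, (L n).Countable) (hLN : ∀ n, L n ⊆ N) (hAL : ∀ n, A n ⊆ ⋃₀ L n) (n : ℕ) :
    ∑' d : maximalMerge L n, w d + ∑ m ∈ Finset.range n, netContent N w (A m) ≤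
      ∑ m ∈ Finset.range (n + 1), ∑' d : L m, w d := by
  induction n with
  | zero => simpa using ENNReal.tsum_mono_subtype w fun d (hd : d ∈ maximalMerge L 0) => hd.1
  | succ n ih =>
    have hAC : A n ⊆ ⋃₀ maximalMerge L n := fun x hx => by
      obtain ⟨u, hu, hxu⟩ := hAL n hx
      obtain ⟨q, hq, huq⟩ := exists_le_mem_maximalMerge hLN hfin hu
      exact ⟨q, hq, huq hxu⟩
    have hstep := netContent_add_tsum_maximal_le hnest hZ
      ((countable_iUnion hLc).mono maximalMerge_subset) (hLc (n + 1))
      (maximalMerge_subset.trans (iUnion_subset hLN)) (hLN (n + 1)) hAC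
      ((hA n.le_succ).trans (hAL (n + 1)))
    rw [Finset.sum_range_succ, Finset.sum_range_succ _ (n + 1)]
    calc ∑' d : maximalMerge L (n + 1), w d + (∑ m ∈ Finset.range n, netContent N w (A m) +
          netContent N w (A n))
        = (netContent N w (A n) + ∑' d : maximalMerge L (n + 1), w d) +
            ∑ m ∈ Finset.range n, netContent N w (A m) := by ring
      _ ≤ (∑' d : maximalMerge L n, w d + ∑' d : L (n + 1), w d) +
            ∑ m ∈ Finset.range n, netContent N w (A m) := add_le_add hstep le_rfl
      _ = (∑' d : maximalMerge L n, w d + ∑ m ∈ Finset.range n, netContent N w (A m)) +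
            ∑' d : L (n + 1), w d := by ring
      _ ≤ _ := add_le_add ih le_rfl

lemma iUnion_subset_sUnion_eventually_mem_maximalMerge (hfin : ∀ d ∈ N, {q ∈ N | d ⊆ q}.Finite)
    (hLN : ∀ n, L n ⊆ N) (hAL : ∀ n, A n ⊆ ⋃₀ L n) :
    ⋃ n, A n ⊆ ⋃₀ {d | ∀ᶠ n in atTop, d ∈ maximalMerge L n} := by
  intro x hx
  obtain ⟨m, hxm⟩ := mem_iUnion.1 hx
  obtain ⟨u, hu, hxu⟩ := hAL m hxm
  obtain ⟨d, hd, hud⟩ := exists_le_mem_maximalMerge hLN hfin hu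
  obtain ⟨q, hdq, hq⟩ := exists_le_eventually_mem_maximalMerge hLN hfin hd
  exact ⟨q, hq, hdq (hud hxu)⟩

theorem netContent_iUnion_le_iSup (hfin : ∀ d ∈ N, {q ∈ N | d ⊆ q}.Finite)
    (hnest : PairwiseNestedOff N Z) (hZ : netContent N w Z = 0) (hA : Monotone A) :
    netContent N w (⋃ n, A n) ≤ ⨆ n, netContent N w (A n) := by
  refine ENNReal.le_of_forall_pos_le_add fun ε hε hlt => ?_
  have hle : ∀ n, netContent N w (A n) ≤ ⨆ n, netContent N w (A n) :=
    le_iSup fun n => netContent N w (A n)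
  have hM : ∀ n, netContent N w (A n) ≠ ⊤ := fun n => ne_top_of_le_ne_top hlt.ne (hle n)
  obtain ⟨η, hη, hηε⟩ := ENNReal.exists_pos_sum_of_countable' (ENNReal.coe_ne_zero.2 hε.ne') ℕ
  choose L hLc hLN hAL hLη using fun n =>
    exists_cover_tsum_lt (ENNReal.lt_add_right (hM n) (hη n).ne')
  have hcost : ∀ n, ∑' d : maximalMerge L n, w d ≤ netContent N w (A n) + ε := fun n => by
    have hsum : ∑ m ∈ Finset.range n, netContent N w (A m) ≠ ⊤ :=
      ENNReal.sum_ne_top.2 fun m _ => hM m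
    refine (ENNReal.add_le_add_iff_right hsum).1 ?_
    calc ∑' d : maximalMerge L n, w d + ∑ m ∈ Finset.range n, netContent N w (A m)
        ≤ ∑ m ∈ Finset.range (n + 1), ∑' d : L m, w d :=
          tsum_maximalMerge_add_sum_netContent_le hfin hnest hZ hA hLc hLN hAL n
      _ ≤ ∑ m ∈ Finset.range (n + 1), (netContent N w (A m) + η m) :=
          Finset.sum_le_sum fun m _ => (hLη m).le
      _ = netContent N w (A n) + ∑ m ∈ Finset.range (n + 1), η m +
            ∑ m ∈ Finset.range n, netContent N w (A m) := by
          rw [Finset.sum_add_distrib, Finset.sum_range_succ]; ring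
      _ ≤ netContent N w (A n) + ε + ∑ m ∈ Finset.range n, netContent N w (A m) := by
          gcongr; exact (ENNReal.sum_le_tsum _).trans hηε.le
  have hlim : {d | ∀ᶠ n in atTop, d ∈ maximalMerge L n} ⊆ ⋃ m, L m := fun d hd =>
    hd.exists.elim fun _ hn => maximalMerge_subset hn
  calc netContent N w (⋃ n, A n) ≤ ∑' d : {d | ∀ᶠ n in atTop, d ∈ maximalMerge L n}, w d :=
        netContent_le_tsum ((countable_iUnion hLc).mono hlim) (hlim.trans (iUnion_subset hLN))
          (iUnion_subset_sUnion_eventually_mem_maximalMerge hfin hLN hAL)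
    _ ≤ ⨆ n, ∑' d : maximalMerge L n, w d := tsum_setOf_eventually_mem_le_iSup w _
    _ ≤ (⨆ n, netContent N w (A n)) + ε :=
        iSup_le fun n => (hcost n).trans (add_le_add (hle n) le_rfl)

theorem tendsto_netContent_iUnion (hfin : ∀ d ∈ N, {q ∈ N | d ⊆ q}.Finite)
    (hnest : PairwiseNestedOff N Z) (hZ : netContent N w Z = 0) (hA : Monotone A) :
    Tendsto (fun n => netContent N w (A n)) atTop (𝓝 (netContent N w (⋃ n, A n))) := by
  have hsup : ⨆ n, netContent N w (A n) = netContent N w (⋃ n, A n) :=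
    le_antisymm (iSup_le fun n => netContent_mono (subset_iUnion A n))
      (netContent_iUnion_le_iSup hfin hnest hZ hA)
  exact hsup ▸ tendsto_atTop_iSup fun _ _ hmn => netContent_mono (hA hmn)

end NetContent

section Dyadic

open Real

def dyadicAngle (n : ℕ) (x : ℝ) : ℝ := 2 * π * x / 2 ^ n

lemma strictMono_dyadicAngle (n : ℕ) : StrictMono (dyadicAngle n) := fun x y hxy => by
  unfold dyadicAngle
  gcongr

lemma dyadicAngle_nonneg {n : ℕ} {x : ℝ} (hx : 0 ≤ x) : 0 ≤ dyadicAngle n x := by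
  unfold dyadicAngle
  positivity

lemma dyadicAngle_le_two_pi {n : ℕ} {x : ℝ} (hx : x ≤ 2 ^ n) : dyadicAngle n x ≤ 2 * π := by
  calc dyadicAngle n x ≤ dyadicAngle n (2 ^ n) := (strictMono_dyadicAngle n).monotone hx
    _ = 2 * π := by simp [dyadicAngle]

lemma dyadicAngle_eq_of_le {n m : ℕ} (hnm : n ≤ m) (x : ℝ) :
    dyadicAngle n x = dyadicAngle m (x * 2 ^ (m - n)) := by
  obtain ⟨k, rfl⟩ := Nat.exists_eq_add_of_le hnm
  simp only [dyadicAngle, Nat.add_sub_cancel_left, pow_add]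
  field_simp

lemma dyadicAngle_add_two_pow_mul (n : ℕ) (x q : ℝ) :
    dyadicAngle n (x + 2 ^ n * q) = dyadicAngle n x + q * (2 * π) := by
  simp only [dyadicAngle]
  field_simp

def dyadicArc (n j : ℕ) : Set ℂ :=
  circleMap 0 1 '' Icc (dyadicAngle n j) (dyadicAngle n (j + 1))

def dyadicArcs : Set (Set ℂ) := {d | IsDyadicArc d}

lemma mC_circleMap_image_Icc {a b : ℝ} (ha : 0 ≤ a) (hb : b ≤ 2 * π) :
    mC (circleMap 0 1 '' Icc a b) = ENNReal.ofReal ((b - a) / (2 * π)) := by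
  have hmeas : MeasurableSet (circleMap 0 1 '' Icc a b) :=
    (isCompact_Icc.image (continuous_circleMap 0 1)).isClosed.measurableSet
  have hpre : circleMap 0 1 ⁻¹' (circleMap 0 1 '' Icc a b) ∩ Ioc 0 (2 * π) ⊆
      Icc a b ∪ {2 * π} := by
    rintro x ⟨⟨y, hy, hyx⟩, hx0, hx2⟩
    rcases hx2.lt_or_eq with hx2 | rfl
    · have hxy : x = y := eq_of_circleMap_eq one_ne_zero
        (abs_sub_lt_iff.2 ⟨by linarith [hy.1], by linarith [hy.2]⟩) hyx.symm
      exact Or.inl (hxy ▸ hy)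
    · exact Or.inr rfl
  have hvol : volume (circleMap 0 1 ⁻¹' (circleMap 0 1 '' Icc a b) ∩ Ioc 0 (2 * π)) =
      ENNReal.ofReal (b - a) := by
    refine le_antisymm ?_ ?_
    · calc _ ≤ volume (Icc a b ∪ {2 * π}) := measure_mono hpre
        _ ≤ volume (Icc a b) + volume {2 * π} := measure_union_le _ _
        _ = ENNReal.ofReal (b - a) := by simp [Real.volume_Icc]
    · rw [← Real.volume_Ioc]
      exact measure_mono fun x hx =>
        ⟨⟨x, Ioc_subset_Icc_self hx, rfl⟩, ha.trans_lt hx.1, hx.2.trans hb⟩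
  rw [mC, Measure.smul_apply, Measure.map_apply (continuous_circleMap 0 1).measurable hmeas,
    Measure.restrict_apply ((continuous_circleMap 0 1).measurable hmeas), hvol, smul_eq_mul,
    ENNReal.ofReal_div_of_pos (by positivity), ENNReal.div_eq_inv_mul]

lemma mC_dyadicArc {n j : ℕ} (hj : j < 2 ^ n) :
    mC (dyadicArc n j) = ENNReal.ofReal ((2 : ℝ) ^ n)⁻¹ := by
  have hj' : (j : ℝ) + 1 ≤ 2 ^ n := by exact_mod_cast hj
  rw [dyadicArc, mC_circleMap_image_Icc (dyadicAngle_nonneg j.cast_nonneg)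
    (dyadicAngle_le_two_pi hj')]
  congr 1
  simp only [dyadicAngle]
  field_simp
  ring

lemma le_of_dyadicArc_subset {n j m i : ℕ} (hj : j < 2 ^ n) (hi : i < 2 ^ m)
    (h : dyadicArc n j ⊆ dyadicArc m i) : m ≤ n := by
  have hmC := measure_mono (μ := mC) h
  rw [mC_dyadicArc hj, mC_dyadicArc hi, ENNReal.ofReal_le_ofReal_iff (by positivity),
    inv_le_inv₀ (by positivity) (by positivity)] at hmC
  exact (pow_le_pow_iff_right₀ one_lt_two).1 hmC

lemma finite_dyadicArcs_superset : ∀ d ∈ dyadicArcs, {q ∈ dyadicArcs | d ⊆ q}.Finite := by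
  rintro _ ⟨n, j, hj, rfl⟩
  refine ((Finset.range (n + 1) ×ˢ Finset.range (2 ^ n)).finite_toSet.image
    fun p => dyadicArc p.1 p.2).subset ?_
  rintro _ ⟨⟨m, i, hi, rfl⟩, hsub⟩
  have hmn := le_of_dyadicArc_subset hj hi hsub
  refine ⟨(m, i), ?_, rfl⟩
  simp only [Finset.coe_product, Finset.coe_range, mem_prod, mem_Iio]
  exact ⟨Nat.lt_succ_of_le hmn, hi.trans_le (Nat.pow_le_pow_right two_pos hmn)⟩

def dyadicEndpoints : Set ℂ := range fun p : ℕ × ℕ => circleMap 0 1 (dyadicAngle p.1 p.2)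

lemma Icc_dyadicAngle_subset_of_mem {n m j i : ℕ} {s : ℝ} (hnm : n ≤ m)
    (hs : s ∈ Icc (dyadicAngle n j) (dyadicAngle n (j + 1)))
    (hs' : s ∈ Ioo (dyadicAngle m i) (dyadicAngle m (i + 1))) :
    Icc (dyadicAngle m i) (dyadicAngle m (i + 1)) ⊆
      Icc (dyadicAngle n j) (dyadicAngle n (j + 1)) := by
  have hmono := strictMono_dyadicAngle m
  rw [dyadicAngle_eq_of_le hnm, dyadicAngle_eq_of_le hnm] at hs ⊢
  have hlo : (j : ℝ) * 2 ^ (m - n) < i + 1 := hmono.lt_iff_lt.1 (hs.1.trans_lt hs'.2)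
  have hhi : (i : ℝ) < (j + 1) * 2 ^ (m - n) := hmono.lt_iff_lt.1 (hs'.1.trans_le hs.2)
  have hlo' : j * 2 ^ (m - n) ≤ i := Nat.lt_succ_iff.1 (by exact_mod_cast hlo)
  have hhi' : i + 1 ≤ (j + 1) * 2 ^ (m - n) := by exact_mod_cast hhi
  exact Icc_subset_Icc (hmono.monotone (by exact_mod_cast hlo'))
    (hmono.monotone (by exact_mod_cast hhi'))

lemma exists_mem_Ioo_of_mem_dyadicArc {m i : ℕ} {x : ℂ} (hx : x ∈ dyadicArc m i)
    (hxE : x ∉ dyadicEndpoints) :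
    ∃ s ∈ Ioo (dyadicAngle m i) (dyadicAngle m (i + 1)), circleMap 0 1 s = x := by
  obtain ⟨s, hs, rfl⟩ := hx
  refine ⟨s, ⟨hs.1.lt_of_ne ?_, hs.2.lt_of_ne ?_⟩, rfl⟩
  · rintro rfl
    exact hxE ⟨(m, i), rfl⟩
  · rintro rfl
    exact hxE ⟨(m, i + 1), by simp⟩

lemma dyadicArc_subset_of_mem {n m j i : ℕ} {x : ℂ} (hnm : n ≤ m) (hj : j < 2 ^ n)
    (hi : i < 2 ^ m) (hxj : x ∈ dyadicArc n j) (hxi : x ∈ dyadicArc m i)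
    (hxE : x ∉ dyadicEndpoints) : dyadicArc m i ⊆ dyadicArc n j := by
  obtain ⟨s, hs, rfl⟩ := hxj
  obtain ⟨s', hs', hss'⟩ := exists_mem_Ioo_of_mem_dyadicArc hxi hxE
  have h0 := dyadicAngle_nonneg (n := n) j.cast_nonneg
  have h0' := dyadicAngle_nonneg (n := m) i.cast_nonneg
  have h2 : dyadicAngle n (j + 1) ≤ 2 * π := dyadicAngle_le_two_pi (by exact_mod_cast hj)
  have h2' : dyadicAngle m (i + 1) ≤ 2 * π := dyadicAngle_le_two_pi (by exact_mod_cast hi)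
  have hs's : s' = s := eq_of_circleMap_eq one_ne_zero
    (abs_sub_lt_iff.2 ⟨by linarith [hs'.2, hs.1], by linarith [hs'.1, hs.2]⟩) hss'
  exact image_mono (Icc_dyadicAngle_subset_of_mem hnm hs (hs's ▸ hs'))

lemma pairwiseNestedOff_dyadicArcs : PairwiseNestedOff dyadicArcs dyadicEndpoints := by
  rintro _ ⟨n, j, hj, rfl⟩ _ ⟨m, i, hi, rfl⟩ x ⟨hxu, hxv⟩ hxE
  rcases le_total n m with hnm | hmn
  · exact Or.inr (dyadicArc_subset_of_mem hnm hj hi hxu hxv hxE)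
  · exact Or.inl (dyadicArc_subset_of_mem hmn hi hj hxv hxu hxE)

lemma circleMap_dyadicAngle_mem_dyadicArc {m g : ℕ} (hmg : m ≤ g) (k : ℕ) :
    circleMap 0 1 (dyadicAngle m k) ∈ dyadicArc g (k * 2 ^ (g - m) % 2 ^ g) := by
  set N := k * 2 ^ (g - m)
  refine ⟨dyadicAngle g (N % 2 ^ g : ℕ), left_mem_Icc.2 ((strictMono_dyadicAngle g).monotone
    (by linarith)), ?_⟩
  have hN : (N : ℝ) = (N % 2 ^ g : ℕ) + 2 ^ g * (N / 2 ^ g : ℕ) := by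
    exact_mod_cast (Nat.mod_add_div N (2 ^ g)).symm
  rw [dyadicAngle_eq_of_le hmg, show (k : ℝ) * 2 ^ (g - m) = N by push_cast [N]; ring, hN,
    dyadicAngle_add_two_pow_mul, (periodic_circleMap 0 1).nat_mul]

def arcWeight (h : ℝ → ℝ) (d : Set ℂ) : ℝ≥0∞ := ENNReal.ofReal (h (mC d).toReal)

lemma IsMeasureFunction.tendsto_ofReal_apply_inv_two_pow {h : ℝ → ℝ}
    (hh : IsMeasureFunction h) :
    Tendsto (fun g : ℕ => ENNReal.ofReal (h ((2 : ℝ) ^ g)⁻¹)) atTop (𝓝 0) := by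
  have hinv : Tendsto (fun g : ℕ => ((2 : ℝ) ^ g)⁻¹) atTop (𝓝[Ici 0] 0) :=
    tendsto_nhdsWithin_iff.2 ⟨tendsto_inv_atTop_zero.comp
      (tendsto_pow_atTop_atTop_of_one_lt one_lt_two),
      Eventually.of_forall fun g => mem_Ici.2 (by positivity)⟩
  simpa [hh.map_zero] using ENNReal.tendsto_ofReal
    ((hh.continuousOn 0 self_mem_Ici).tendsto.comp hinv)

lemma netContent_dyadicEndpoints_eq_zero {h : ℝ → ℝ} (hh : IsMeasureFunction h) :
    netContent dyadicArcs (arcWeight h) dyadicEndpoints = 0 := by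
  refine netContent_eq_zero_of_countable (countable_range _) ?_
  rintro _ ⟨⟨m, k⟩, rfl⟩ ε hε
  obtain ⟨g, hg, hmg⟩ := ((hh.tendsto_ofReal_apply_inv_two_pow.eventually_lt_const hε).and
    (eventually_ge_atTop m)).exists
  have hj : k * 2 ^ (g - m) % 2 ^ g < 2 ^ g := Nat.mod_lt _ (by positivity)
  refine ⟨dyadicArc g _, ⟨g, _, hj, rfl⟩, circleMap_dyadicAngle_mem_dyadicArc hmg k, ?_⟩
  rwa [arcWeight, mC_dyadicArc hj, ENNReal.toReal_ofReal (by positivity)]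

end Dyadic

lemma dyadicContent_eq_netContent (h : ℝ → ℝ) :
    dyadicContent h = netContent dyadicArcs (arcWeight h) := rfl

theorem tendsto_dyadicContent_of_monotone_general
    (h : ℝ → ℝ) (hh : IsMeasureFunction h) (A : ℕ → Set ℂ)
    (hmono : Monotone A) :
    Filter.Tendsto (fun n => dyadicContent h (A n)) Filter.atTop
      (nhds (dyadicContent h (⋃ n, A n))) := by
  rw [dyadicContent_eq_netContent]
  exact tendsto_netContent_iUnion finite_dyadicArcs_superset pairwiseNestedOff_dyadicArcs
    (netContent_dyadicEndpoints_eq_zero hh) hmono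

/-- For any measure function `h`, the dyadic Hausdorff content `M_{h,d}`
is continuous along increasing unions: if `A n` is an increasing sequence of subsets of
the circle with union `A`, then `M_{h,d}(A) = lim_n M_{h,d}(A n)`. -/
theorem tendsto_dyadicContent_of_monotone
    (h : ℝ → ℝ) (hh : IsMeasureFunction h) (A : ℕ → Set ℂ)
    (hA : ∀ n, A n ⊆ unitCircleSet) (hmono : Monotone A) :
    Filter.Tendsto (fun n => dyadicContent h (A n)) Filter.atTop
      (nhds (dyadicContent h (⋃ n, A n))) :=
  tendsto_dyadicContent_of_monotone_general h hh A hmono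
end
end

section
/- If A and B are h-Carleson subsets of 𝕋 (for the same measure function h), then their union A ∪ B is an h-Carleson set. -/
open MeasureTheory Set Filter Topology
open scoped ENNReal

noncomputable section

/-! Cover `𝕋 \ (A ∪ B)` as follows. For each arc `ℓ = (a, b)` of the cover of `𝕋 \ A`, keep the
initial and the final segment of `ℓ` that avoid `B`: two subarcs of `ℓ`, costing at most
`2 h(|ℓ|)`. Any other point of `ℓ \ B` lies between two points of `B` inside `ℓ`, so an arc of the
cover of `𝕋 \ B` through it, being disjoint from `B`, stays between them; hence it lies in `ℓ` and
misses `A`. The edge segments and the arcs of the cover of `𝕋 \ B` missing `A` therefore cover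
`𝕋 \ (A ∪ B)` at cost at most `2 Σ_A + Σ_B`. -/

lemma circleMap_eq_circleMap_iff_exists_int {s t : ℝ} :
    circleMap 0 1 s = circleMap 0 1 t ↔ ∃ k : ℤ, s = t + k * (2 * Real.pi) := by
  rw [circleMap_eq_circleMap_iff 0 one_ne_zero]
  refine exists_congr fun k => ⟨fun hk => ?_, fun hk => by rw [hk]; push_cast; ring⟩
  have hk' : (s : ℂ) * Complex.I = ((t + k * (2 * Real.pi) : ℝ) : ℂ) * Complex.I := by
    push_cast; linear_combination hk
  exact_mod_cast mul_right_cancel₀ Complex.I_ne_zero hk'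

lemma image_circleMap_Ioo_add_int_mul (c d : ℝ) (k : ℤ) :
    circleMap 0 1 '' Ioo (c + k * (2 * Real.pi)) (d + k * (2 * Real.pi)) =
      circleMap 0 1 '' Ioo c d := by
  rw [← image_add_const_Ioo, image_image]
  exact image_congr fun x _ => (periodic_circleMap 0 1).int_mul k x

lemma image_circleMap_Ioo_subset_of_disjoint {c d s₁ s₂ : ℝ} {B : Set ℂ}
    (hB : Disjoint (circleMap 0 1 '' Ioo c d) B) (h₁ : circleMap 0 1 s₁ ∈ B)
    (h₂ : circleMap 0 1 s₂ ∈ B)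
    (hmeet : (circleMap 0 1 '' Ioo c d ∩ circleMap 0 1 '' Ioo s₁ s₂).Nonempty) :
    circleMap 0 1 '' Ioo c d ⊆ circleMap 0 1 '' Ioo s₁ s₂ := by
  obtain ⟨-, ⟨u, hu, rfl⟩, v, hv, hvu⟩ := hmeet
  obtain ⟨k, rfl⟩ := circleMap_eq_circleMap_iff_exists_int.1 hvu.symm
  rw [← image_circleMap_Ioo_add_int_mul c d (-k)] at hB ⊢
  have hv' : v ∈ Ioo (c + (-k : ℤ) * (2 * Real.pi)) (d + (-k : ℤ) * (2 * Real.pi)) := by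
    push_cast; constructor <;> linarith [hu.1, hu.2]
  refine image_mono (Ioo_subset_Ioo ?_ ?_) <;> by_contra! hlt
  · exact hB.ne_of_mem (mem_image_of_mem _ ⟨hlt, hv.1.trans hv'.2⟩) h₁ rfl
  · exact hB.ne_of_mem (mem_image_of_mem _ ⟨hv'.1.trans hv.2, hlt⟩) h₂ rfl

def leftRun (U : Set ℝ) (a b : ℝ) : Set ℝ := {t ∈ Ioo a b | Ioc a t ⊆ U}

def rightRun (U : Set ℝ) (a b : ℝ) : Set ℝ := {t ∈ Ioo a b | Ico t b ⊆ U}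

lemma exists_leftRun_eq_Ioo {U : Set ℝ} {a b : ℝ} (hU : IsOpen U)
    (hne : (leftRun U a b).Nonempty) :
    ∃ c, a < c ∧ c ≤ b ∧ leftRun U a b = Ioo a c := by
  have hbdd : BddAbove (leftRun U a b) := ⟨b, fun t ht => ht.1.2.le⟩
  obtain ⟨w, hw⟩ := hne
  refine ⟨sSup (leftRun U a b), hw.1.1.trans_le (le_csSup hbdd hw),
    csSup_le ⟨w, hw⟩ fun t ht => ht.1.2.le, Subset.antisymm (fun t ht => ⟨ht.1.1, ?_⟩) ?_⟩
  · obtain ⟨u, hu, hUu⟩ :=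
      exists_Ico_subset_of_mem_nhds' (hU.mem_nhds (ht.2 ⟨ht.1.1, le_rfl⟩)) ht.1.2
    have hmid : (t + u) / 2 ∈ leftRun U a b := by
      refine ⟨⟨by linarith [ht.1.1, hu.1], by linarith [hu.1, hu.2]⟩, fun s hs => ?_⟩
      rcases le_or_gt s t with hst | hts
      · exact ht.2 ⟨hs.1, hst⟩
      · exact hUu ⟨hts.le, by linarith [hs.2, hu.1]⟩
    exact (by linarith [hu.1] : t < (t + u) / 2).trans_le (le_csSup hbdd hmid)
  · intro t ht
    obtain ⟨v, hv, htv⟩ := exists_lt_of_lt_csSup ⟨w, hw⟩ ht.2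
    exact ⟨⟨ht.1, htv.trans hv.1.2⟩, (Ioc_subset_Ioc_right htv.le).trans hv.2⟩

lemma exists_rightRun_eq_Ioo {U : Set ℝ} {a b : ℝ} (hU : IsOpen U)
    (hne : (rightRun U a b).Nonempty) :
    ∃ c, a ≤ c ∧ c < b ∧ rightRun U a b = Ioo c b := by
  have hbdd : BddBelow (rightRun U a b) := ⟨a, fun t ht => ht.1.1.le⟩
  obtain ⟨w, hw⟩ := hne
  refine ⟨sInf (rightRun U a b), le_csInf ⟨w, hw⟩ fun t ht => ht.1.1.le,
    (csInf_le hbdd hw).trans_lt hw.1.2, Subset.antisymm (fun t ht => ⟨?_, ht.1.2⟩) ?_⟩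
  · obtain ⟨u, hu, hUu⟩ :=
      exists_Ioc_subset_of_mem_nhds' (hU.mem_nhds (ht.2 ⟨le_rfl, ht.1.2⟩)) ht.1.1
    have hmid : (u + t) / 2 ∈ rightRun U a b := by
      refine ⟨⟨by linarith [hu.1, hu.2], by linarith [ht.1.2, hu.2]⟩, fun s hs => ?_⟩
      rcases le_or_gt t s with hts | hst
      · exact ht.2 ⟨hts, hs.2⟩
      · exact hUu ⟨by linarith [hs.1, hu.2], hst.le⟩
    exact (csInf_le hbdd hmid).trans_lt (by linarith [hu.2] : (u + t) / 2 < t)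
  · intro t ht
    obtain ⟨v, hv, hvt⟩ := exists_lt_of_csInf_lt ⟨w, hw⟩ ht.1
    exact ⟨⟨hv.1.1.trans hvt, ht.2⟩, (Ico_subset_Ico_left hvt.le).trans hv.2⟩

lemma mem_leftRun_or_mem_rightRun_or_exists {U : Set ℝ} {a b t : ℝ} (ht : t ∈ Ioo a b)
    (htU : t ∈ U) :
    t ∈ leftRun U a b ∨ t ∈ rightRun U a b ∨
      ∃ s₁ s₂, s₁ ∉ U ∧ s₂ ∉ U ∧ t ∈ Ioo s₁ s₂ ∧ Ioo s₁ s₂ ⊆ Ioo a b := by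
  by_cases hl : Ioc a t ⊆ U
  · exact Or.inl ⟨ht, hl⟩
  by_cases hr : Ico t b ⊆ U
  · exact Or.inr (Or.inl ⟨ht, hr⟩)
  obtain ⟨s₁, hs₁, hs₁U⟩ := not_subset.1 hl
  obtain ⟨s₂, hs₂, hs₂U⟩ := not_subset.1 hr
  have h₁ : s₁ < t := lt_of_le_of_ne hs₁.2 (ne_of_mem_of_not_mem htU hs₁U).symm
  have h₂ : t < s₂ := lt_of_le_of_ne hs₂.1 (ne_of_mem_of_not_mem htU hs₂U)
  exact Or.inr (Or.inr ⟨s₁, s₂, hs₁U, hs₂U, ⟨h₁, h₂⟩, Ioo_subset_Ioo hs₁.1.le hs₂.2.le⟩)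

def leftArc (B : Set ℂ) (a b : ℝ) : Set ℂ := circleMap 0 1 '' leftRun (circleMap 0 1 ⁻¹' Bᶜ) a b

def rightArc (B : Set ℂ) (a b : ℝ) : Set ℂ := circleMap 0 1 '' rightRun (circleMap 0 1 ⁻¹' Bᶜ) a b

lemma leftArc_subset_diff (B : Set ℂ) (a b : ℝ) :
    leftArc B a b ⊆ circleMap 0 1 '' Ioo a b \ B := by
  rintro - ⟨t, ht, rfl⟩
  exact ⟨mem_image_of_mem _ ht.1, ht.2 ⟨ht.1.1, le_rfl⟩⟩

lemma rightArc_subset_diff (B : Set ℂ) (a b : ℝ) :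
    rightArc B a b ⊆ circleMap 0 1 '' Ioo a b \ B := by
  rintro - ⟨t, ht, rfl⟩
  exact ⟨mem_image_of_mem _ ht.1, ht.2 ⟨le_rfl, ht.1.2⟩⟩

lemma isOpenArc_leftArc {B : Set ℂ} {a b : ℝ} (hB : IsClosed B) (hab : b - a ≤ 2 * Real.pi)
    (hne : (leftArc B a b).Nonempty) : IsOpenArc (leftArc B a b) := by
  obtain ⟨c, hac, hcb, hc⟩ :=
    exists_leftRun_eq_Ioo (hB.isOpen_compl.preimage (continuous_circleMap 0 1)) hne.of_image
  exact ⟨a, c, hac, by linarith, by rw [leftArc, hc]⟩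

lemma isOpenArc_rightArc {B : Set ℂ} {a b : ℝ} (hB : IsClosed B) (hab : b - a ≤ 2 * Real.pi)
    (hne : (rightArc B a b).Nonempty) : IsOpenArc (rightArc B a b) := by
  obtain ⟨c, hac, hcb, hc⟩ :=
    exists_rightRun_eq_Ioo (hB.isOpen_compl.preimage (continuous_circleMap 0 1)) hne.of_image
  exact ⟨c, b, hcb, by linarith, by rw [rightArc, hc]⟩

instance isFiniteMeasure_mC : IsFiniteMeasure mC := by
  have : IsFiniteMeasure (volume.restrict (Ioc 0 (2 * Real.pi))) :=
    isFiniteMeasure_restrict.2 measure_Ioc_lt_top.ne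
  exact Measure.smul_finite _ (ENNReal.inv_ne_top.2 (ENNReal.ofReal_pos.2 Real.two_pi_pos).ne')

lemma IsMeasureFunction.monotone_ofReal_mC {h : ℝ → ℝ} (hh : IsMeasureFunction h) :
    Monotone fun s : Set ℂ => ENNReal.ofReal (h (mC s).toReal) := fun _ t hst =>
  ENNReal.ofReal_le_ofReal <| hh.monotoneOn ENNReal.toReal_nonneg ENNReal.toReal_nonneg
    (ENNReal.toReal_mono (measure_ne_top mC t) (measure_mono hst))

lemma ENNReal.tsum_image_le {α β : Type*} (f : α → β) (s : Set α) (g : β → ℝ≥0∞) :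
    ∑' y : f '' s, g y ≤ ∑' x : s, g (f x) :=
  ENNReal.tsum_le_tsum_comp_of_surjective imageFactorization_surjective (fun y : f '' s => g y)

def edgeArcs (B : Set ℂ) (L : Set (Set ℂ)) (a b : Set ℂ → ℝ) : Set (Set ℂ) :=
  ((fun ℓ => leftArc B (a ℓ) (b ℓ)) '' L ∪ (fun ℓ => rightArc B (a ℓ) (b ℓ)) '' L) \ {∅}

section edgeArcs

variable {B : Set ℂ} {L : Set (Set ℂ)} {a b : Set ℂ → ℝ}

lemma Set.Countable.edgeArcs (hL : L.Countable) : (edgeArcs B L a b).Countable :=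
  ((hL.image _).union (hL.image _)).mono sdiff_subset

lemma isOpenArc_of_mem_edgeArcs (hB : IsClosed B) (hlen : ∀ ℓ ∈ L, b ℓ - a ℓ ≤ 2 * Real.pi) :
    ∀ p ∈ edgeArcs B L a b, IsOpenArc p := by
  rintro p ⟨⟨ℓ, hℓ, rfl⟩ | ⟨ℓ, hℓ, rfl⟩, hp⟩
  · exact isOpenArc_leftArc hB (hlen ℓ hℓ) (nonempty_iff_ne_empty.2 hp)
  · exact isOpenArc_rightArc hB (hlen ℓ hℓ) (nonempty_iff_ne_empty.2 hp)

lemma tsum_edgeArcs_le {F : Set ℂ → ℝ≥0∞} (hF : Monotone F)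
    (hL : ∀ ℓ ∈ L, ℓ = circleMap 0 1 '' Ioo (a ℓ) (b ℓ)) :
    ∑' p : edgeArcs B L a b, F p ≤ ∑' ℓ : L, F ℓ + ∑' ℓ : L, F ℓ := by
  have hleft (ℓ : L) : F (leftArc B (a ℓ) (b ℓ)) ≤ F ℓ :=
    hF ((leftArc_subset_diff _ _ _).trans (sdiff_subset.trans (hL ℓ ℓ.2).ge))
  have hright (ℓ : L) : F (rightArc B (a ℓ) (b ℓ)) ≤ F ℓ :=
    hF ((rightArc_subset_diff _ _ _).trans (sdiff_subset.trans (hL ℓ ℓ.2).ge))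
  calc ∑' p : edgeArcs B L a b, F p
      ≤ ∑' p : ↑((fun ℓ => leftArc B (a ℓ) (b ℓ)) '' L ∪ (fun ℓ => rightArc B (a ℓ) (b ℓ)) '' L),
          F p := ENNReal.tsum_mono_subtype _ sdiff_subset
    _ ≤ ∑' p : (fun ℓ => leftArc B (a ℓ) (b ℓ)) '' L, F p +
          ∑' p : (fun ℓ => rightArc B (a ℓ) (b ℓ)) '' L, F p := ENNReal.tsum_union_le _ _ _
    _ ≤ ∑' ℓ : L, F (leftArc B (a ℓ) (b ℓ)) + ∑' ℓ : L, F (rightArc B (a ℓ) (b ℓ)) :=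
          add_le_add (ENNReal.tsum_image_le _ _ _) (ENNReal.tsum_image_le _ _ _)
    _ ≤ ∑' ℓ : L, F ℓ + ∑' ℓ : L, F ℓ :=
          add_le_add (ENNReal.tsum_le_tsum hleft) (ENNReal.tsum_le_tsum hright)

end edgeArcs

lemma subset_unitCircleSet_diff_of_mem {A : Set ℂ} {L : Set (Set ℂ)} (hL : unitCircleSet \ A = ⋃₀ L)
    {l : Set ℂ} (hl : l ∈ L) : l ⊆ unitCircleSet \ A :=
  hL ▸ subset_sUnion_of_mem hl

lemma unitCircleSet_diff_union_eq_sUnion {A B : Set ℂ} {LA LB : Set (Set ℂ)} {a b : Set ℂ → ℝ}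
    (hLA : unitCircleSet \ A = ⋃₀ LA) (hLB : unitCircleSet \ B = ⋃₀ LB)
    (hℓ : ∀ ℓ ∈ LA, ℓ = circleMap 0 1 '' Ioo (a ℓ) (b ℓ)) (hLBarc : ∀ l ∈ LB, IsOpenArc l) :
    unitCircleSet \ (A ∪ B) = ⋃₀ (edgeArcs B LA a b ∪ {l ∈ LB | Disjoint l A}) := by
  rw [← sdiff_sdiff]
  refine Subset.antisymm (fun x ⟨⟨hxT, hxA⟩, hxB⟩ => ?_) (sUnion_subset ?_)
  · obtain ⟨ℓ, hℓLA, hxℓ⟩ := hLA.subset ⟨hxT, hxA⟩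
    rw [hℓ ℓ hℓLA] at hxℓ
    obtain ⟨t, ht, rfl⟩ := hxℓ
    rcases mem_leftRun_or_mem_rightRun_or_exists (U := circleMap 0 1 ⁻¹' Bᶜ) ht hxB with
      htl | htr | ⟨s₁, s₂, h₁, h₂, hts, hsub⟩
    · exact ⟨_, Or.inl ⟨Or.inl ⟨ℓ, hℓLA, rfl⟩, (nonempty_of_mem (mem_image_of_mem _ htl)).ne_empty⟩,
        mem_image_of_mem _ htl⟩
    · exact ⟨_, Or.inl ⟨Or.inr ⟨ℓ, hℓLA, rfl⟩, (nonempty_of_mem (mem_image_of_mem _ htr)).ne_empty⟩,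
        mem_image_of_mem _ htr⟩
    obtain ⟨l, hlLB, hxl⟩ := hLB.subset ⟨hxT, hxB⟩
    obtain ⟨c, d, -, -, rfl⟩ := hLBarc l hlLB
    have hlB : Disjoint (circleMap 0 1 '' Ioo c d) B :=
      disjoint_sdiff_left.mono_left (subset_unitCircleSet_diff_of_mem hLB hlLB)
    have hlA : circleMap 0 1 '' Ioo c d ⊆ unitCircleSet \ A :=
      (image_circleMap_Ioo_subset_of_disjoint hlB (not_not.1 h₁) (not_not.1 h₂)
        ⟨_, hxl, mem_image_of_mem _ hts⟩).trans
        ((image_mono hsub).trans ((hℓ ℓ hℓLA).ge.trans (subset_unitCircleSet_diff_of_mem hLA hℓLA)))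
    exact ⟨_, Or.inr ⟨hlLB, disjoint_sdiff_left.mono_left hlA⟩, hxl⟩
  · have hedge (ℓ : Set ℂ) (hℓLA : ℓ ∈ LA) :
        circleMap 0 1 '' Ioo (a ℓ) (b ℓ) \ B ⊆ (unitCircleSet \ A) \ B :=
      sdiff_subset_sdiff_left ((hℓ ℓ hℓLA).ge.trans (subset_unitCircleSet_diff_of_mem hLA hℓLA))
    rintro p (⟨⟨ℓ, hℓLA, rfl⟩ | ⟨ℓ, hℓLA, rfl⟩, -⟩ | ⟨hpLB, hpA⟩)
    · exact (leftArc_subset_diff _ _ _).trans (hedge ℓ hℓLA)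
    · exact (rightArc_subset_diff _ _ _).trans (hedge ℓ hℓLA)
    · intro x hx
      obtain ⟨hxT, hxB⟩ := subset_unitCircleSet_diff_of_mem hLB hpLB hx
      exact ⟨⟨hxT, hpA.notMem_of_mem_left hx⟩, hxB⟩

/-- The union of two `h`-Carleson sets is an `h`-Carleson set. -/
theorem IsHCarleson.union
    (h : ℝ → ℝ) (hh : IsMeasureFunction h) (A B : Set ℂ)
    (hA : IsHCarleson h A) (hB : IsHCarleson h B) :
    IsHCarleson h (A ∪ B) := by
  obtain ⟨hAT, hAcl, LA, hLAc, hLAarc, hLA, hLAsum⟩ := hA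
  obtain ⟨hBT, hBcl, LB, hLBc, hLBarc, hLB, hLBsum⟩ := hB
  choose! a b _ hlen hℓ using hLAarc
  refine ⟨union_subset hAT hBT, hAcl.union hBcl, edgeArcs B LA a b ∪ {l ∈ LB | Disjoint l A},
    hLAc.edgeArcs.union (hLBc.mono (sep_subset _ _)),
    fun p hp => hp.elim (isOpenArc_of_mem_edgeArcs hBcl hlen p) fun hp => hLBarc p hp.1,
    unitCircleSet_diff_union_eq_sUnion hLA hLB hℓ hLBarc, ?_⟩
  refine ne_top_of_le_ne_top
    (ENNReal.add_ne_top.2 ⟨ENNReal.add_ne_top.2 ⟨hLAsum, hLAsum⟩, hLBsum⟩) ?_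
  calc _ ≤ _ := ENNReal.tsum_union_le _ _ _
    _ ≤ _ := add_le_add (tsum_edgeArcs_le hh.monotone_ofReal_mC hℓ)
        (ENNReal.tsum_mono_subtype (fun s => ENNReal.ofReal (h (mC s).toReal)) (sep_subset _ _))
end
end

section
/- If A and B are h-Carleson subsets of 𝕋 (for the same measure function h), then their intersection A ∩ B is an h-Carleson set. -/
open MeasureTheory Set Filter Topology
open scoped ENNReal

noncomputable section

/-- The intersection of two `h`-Carleson sets is an `h`-Carleson set. -/
theorem IsHCarleson.inter
    (h : ℝ → ℝ) (A B : Set ℂ)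
    (hA : IsHCarleson h A) (hB : IsHCarleson h B) :
    IsHCarleson h (A ∩ B) := by
  obtain ⟨hA_sub, hA_closed, LA, hLA_count, hLA_arc, hLA_eq, hLA_sum⟩ := hA
  obtain ⟨-, hB_closed, LB, hLB_count, hLB_arc, hLB_eq, hLB_sum⟩ := hB
  refine ⟨inter_subset_left.trans hA_sub, hA_closed.inter hB_closed, LA ∪ LB,
    hLA_count.union hLB_count, fun ℓ hℓ => hℓ.elim (hLA_arc ℓ) (hLB_arc ℓ), ?_, ?_⟩
  · rw [sdiff_inter, hLA_eq, hLB_eq, sUnion_union]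
  · exact ne_top_of_le_ne_top (ENNReal.add_ne_top.2 ⟨hLA_sum, hLB_sum⟩)
      (ENNReal.tsum_union_le (fun ℓ => ENNReal.ofReal (h (mC ℓ).toReal)) LA LB)
end
end

section
/- Let E be any Lebesgue measurable subset of 𝕋 and h a measure function. Then there exist disjoint measurable sets F and Ẽ and a set N of Lebesgue measure zero with E = (F ∪ Ẽ) \ N, such that: (i) every h-Carleson set that is almost contained in E is almost contained in Ẽ; and (ii) Ẽ equals, up to a set of Lebesgue measure zero, a countable union of h-Carleson sets each almost contained in E. -/
open MeasureTheory Set Filter Topology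
open scoped ENNReal

noncomputable section

/-! In an s-finite measure space every family of measurable sets has an essential union,
realised by a countable subfamily. Let `V` be such a union of the `h`-Carleson sets almost
contained in `E` (the family is nonempty since `∅` is `h`-Carleson); then `Ẽ = E ∩ V` and
`F = E \ V` work with `N = ∅`, because `V \ E` is null. -/

theorem MeasureTheory.Measure.exists_seq_ae_subset_iUnion {α : Type*} [MeasurableSpace α]
    (μ : Measure α) [SFinite μ] {C : Set (Set α)} (hC : ∀ s ∈ C, MeasurableSet s)
    (hne : C.Nonempty) : ∃ G : ℕ → Set α, (∀ n, G n ∈ C) ∧ ∀ s ∈ C, s ≤ᵐ[μ] ⋃ n, G n := by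
  obtain ⟨D, hDC, hDc, hD⟩ := μ.exists_ae_subset_biUnion_countable hC
  obtain ⟨s₀, hs₀⟩ := hne
  obtain ⟨G, hG⟩ := (hDc.insert s₀).exists_eq_range (insert_nonempty _ _)
  refine ⟨G, fun n => ?_, fun s hs => (hD s hs).trans (Eventually.of_forall ?_)⟩
  · have : G n ∈ insert s₀ D := hG ▸ mem_range_self n
    exact this.elim (· ▸ hs₀) (hDC ·)
  · rintro x ⟨t, ht, hxt⟩
    obtain ⟨n, rfl⟩ : t ∈ range G := hG ▸ mem_insert_of_mem _ ht
    exact mem_iUnion.2 ⟨n, hxt⟩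

instance sFinite_mC : SFinite mC := by
  unfold mC
  infer_instance

theorem unitCircleSet_eq_union_openArcs :
    unitCircleSet =
      circleMap 0 1 '' Ioo 0 (2 * Real.pi) ∪ circleMap 0 1 '' Ioo (-Real.pi) Real.pi := by
  refine Subset.antisymm (fun z hz => ?_) ?_
  · have hz' : circleMap 0 1 (Complex.arg z) = z := by
      have hnorm : ‖z‖ = 1 := by simpa [unitCircleSet] using hz
      simpa [circleMap, hnorm] using Complex.norm_mul_exp_arg_mul_I z
    rcases (Complex.arg_le_pi z).eq_or_lt with hπ | hπ
    · exact Or.inl ⟨_, ⟨by rw [hπ]; exact Real.pi_pos, by rw [hπ]; linarith [Real.pi_pos]⟩, hz'⟩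
    · exact Or.inr ⟨_, ⟨Complex.neg_pi_lt_arg z, hπ⟩, hz'⟩
  · rintro z (⟨t, -, rfl⟩ | ⟨t, -, rfl⟩) <;> exact circleMap_mem_sphere 0 zero_le_one t

theorem isHCarleson_empty (h : ℝ → ℝ) : IsHCarleson h ∅ := by
  have hπ := Real.pi_pos
  set L : Set (Set ℂ) :=
    {circleMap 0 1 '' Ioo 0 (2 * Real.pi), circleMap 0 1 '' Ioo (-Real.pi) Real.pi}
  have hL : L.Finite := (finite_singleton _).insert _
  have := hL.fintype
  refine ⟨empty_subset _, isClosed_empty, L, hL.countable, ?_, ?_, ?_⟩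
  · rintro ℓ (rfl | rfl)
    · exact ⟨0, 2 * Real.pi, by linarith, by linarith, rfl⟩
    · exact ⟨-Real.pi, Real.pi, by linarith, by linarith, rfl⟩
  · rw [sdiff_empty, sUnion_pair, unitCircleSet_eq_union_openArcs]
  · rw [tsum_fintype]
    exact ENNReal.sum_ne_top.2 fun _ _ => ENNReal.ofReal_ne_top

theorem exists_seq_isHCarleson_ae_subset_iUnion (h : ℝ → ℝ) (E : Set ℂ) :
    ∃ G : ℕ → Set ℂ, (∀ n, IsHCarleson h (G n) ∧ mC (G n \ E) = 0) ∧
      ∀ A, IsHCarleson h A → mC (A \ E) = 0 → A ≤ᵐ[mC] ⋃ n, G n :=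
  mC.exists_seq_ae_subset_iUnion (C := {A | IsHCarleson h A ∧ mC (A \ E) = 0})
    (fun _ hA => hA.1.2.1.measurableSet) ⟨∅, isHCarleson_empty h, by simp⟩
    |>.imp fun _ hG => ⟨hG.1, fun A hA hAE => hG.2 A ⟨hA, hAE⟩⟩

theorem exists_coreResidualDecomp_general
    (h : ℝ → ℝ) (E : Set ℂ)
    (hE : MeasurableSet E) :
    ∃ F Etilde : Set ℂ, IsCoreResidualDecomp h E Etilde F := by
  obtain ⟨G, hG, hcover⟩ := exists_seq_isHCarleson_ae_subset_iUnion h E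
  set V := ⋃ n, G n
  have hV : MeasurableSet V := MeasurableSet.iUnion fun n => (hG n).1.2.1.measurableSet
  refine ⟨E \ V, E ∩ V, hE.inter hV, hE.diff hV, disjoint_sdiff_inter.symm,
    ⟨∅, measure_empty, by rw [sdiff_empty, sdiff_union_inter]⟩, fun A hA hAE => ?_, G, hG, ?_⟩
  · rw [sdiff_inter]
    exact measure_union_null hAE (ae_le_set.1 (hcover A hA hAE))
  · rw [sdiff_eq_empty.2 inter_subset_right, empty_union, sdiff_inter_self_eq_sdiff, iUnion_sdiff]
    exact measure_iUnion_null fun n => (hG n).2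

/-- Every measurable subset `E` of the circle admits a core-residual
decomposition with respect to any measure function `h`: there are disjoint measurable
sets `F` (the residual) and `Ẽ` (the core) and a null set `N` with `E = (F ∪ Ẽ) \ N`,
every `h`-Carleson set almost contained in `E` is almost contained in `Ẽ`, and `Ẽ` is,
up to a null set, a countable union of `h`-Carleson sets almost contained in `E`. -/
theorem exists_coreResidualDecomp
    (h : ℝ → ℝ) (hh : IsMeasureFunction h) (E : Set ℂ)
    (hE : MeasurableSet E) (hEsub : E ⊆ unitCircleSet) :
    ∃ F Etilde : Set ℂ, IsCoreResidualDecomp h E Etilde F :=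
  exists_coreResidualDecomp_general h E hE
end
end

section
/- Let E ⊆ 𝕋 be measurable, h a measure function, and I an arc of 𝕋. If (core_h(E), res_h(E)) is a core-residual decomposition of E with respect to h, then (I ∩ core_h(E), I ∩ res_h(E)) is a core-residual decomposition of I ∩ E with respect to h; that is, core_h(I ∩ E) = I ∩ core_h(E) and res_h(I ∩ E) = I ∩ res_h(E), up to sets of Lebesgue measure zero. -/
open MeasureTheory Set Filter Topology
open scoped ENNReal

noncomputable section

/-!
An open arc `I` is a countable union of closed arcs `J_k`, each shorter than the full circle.
Intersecting an `h`-Carleson set with `J_k` only adds the single complementary open arc of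
`J_k` to its complement, so it stays `h`-Carleson. Hence the `h`-Carleson sets exhausting
`core` yield, after intersecting with the `J_k`, countably many `h`-Carleson sets exhausting
`I ∩ core`; the remaining conditions are set algebra.
-/

open Real

lemma range_circleMap_eq_image_Ico (z : ℂ) (R c : ℝ) :
    range (circleMap z R) = circleMap z R '' Ico c (c + 2 * π) := by
  have hc : c < c + 2 * π := lt_add_of_pos_right c two_pi_pos
  rw [← (periodic_circleMap z R).image_Icc two_pi_pos c, ← Ico_insert_right hc.le,
    image_insert_eq, periodic_circleMap z R c,
    insert_eq_of_mem (mem_image_of_mem _ (left_mem_Ico.2 hc))]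

lemma range_circleMap_diff_image_Icc (z : ℂ) {R : ℝ} (hR : R ≠ 0) {c d : ℝ} (hcd : c ≤ d)
    (hd : d < c + 2 * π) :
    range (circleMap z R) \ circleMap z R '' Icc c d = circleMap z R '' Ioo d (c + 2 * π) := by
  have hinj : (Ico c (c + 2 * π)).InjOn (circleMap z R) :=
    injOn_circleMap_of_abs_sub_le' hR (by linarith)
  rw [range_circleMap_eq_image_Ico z R c, ← hinj.image_sdiff_subset (Icc_subset_Ico_right hd),
    ← Icc_union_Ioo_eq_Ico hcd hd, union_sdiff_cancel_left]
  rintro x ⟨hx₁, hx₂⟩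
  exact absurd hx₁.2 (not_le.2 hx₂.1)

lemma unitCircleSet_eq_range_circleMap : unitCircleSet = range (circleMap 0 1) := by
  rw [range_circleMap, abs_one, unitCircleSet]

lemma Ioo_eq_iUnion_Icc {α : Type*} [Field α] [LinearOrder α] [IsStrictOrderedRing α]
    [Archimedean α] {a b : α} (hab : a < b) :
    Ioo a b = ⋃ n : ℕ, Icc (a + (b - a) / (n + 2)) (b - (b - a) / (n + 2)) := by
  refine Subset.antisymm (fun x ⟨hax, hxb⟩ => ?_) (iUnion_subset fun n => ?_)
  · have hm : 0 < min (x - a) (b - x) := lt_min (sub_pos.2 hax) (sub_pos.2 hxb)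
    obtain ⟨n, hn⟩ := exists_nat_gt ((b - a) / min (x - a) (b - x))
    have hδ : (b - a) / (n + 2) < min (x - a) (b - x) := by
      rw [div_lt_iff₀ (by positivity)]
      rw [div_lt_iff₀ hm] at hn
      nlinarith
    have hxa := min_le_left (x - a) (b - x)
    have hbx := min_le_right (x - a) (b - x)
    exact mem_iUnion.2 ⟨n, by constructor <;> linarith⟩
  · have hδ : 0 < (b - a) / (n + 2) := div_pos (sub_pos.2 hab) (by positivity)
    exact Icc_subset_Ioo (by linarith) (by linarith)

lemma IsOpenArc.exists_eq_iUnion_image_Icc {I : Set ℂ} (hI : IsOpenArc I) :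
    ∃ c d : ℕ → ℝ, (∀ k, c k ≤ d k ∧ d k < c k + 2 * π) ∧
      I = ⋃ k, circleMap 0 1 '' Icc (c k) (d k) := by
  obtain ⟨a, b, hab, hba, rfl⟩ := hI
  refine ⟨fun k => a + (b - a) / (k + 2), fun k => b - (b - a) / (k + 2), fun k => ?_, ?_⟩
  · have hδ : 0 < (b - a) / (k + 2) := div_pos (sub_pos.2 hab) (by positivity)
    have h2δ : 2 * ((b - a) / (k + 2)) ≤ b - a := by
      rw [mul_div_assoc', div_le_iff₀ (by positivity)]
      nlinarith [(k.cast_nonneg : (0 : ℝ) ≤ k)]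
    constructor <;> linarith
  · rw [← image_iUnion, ← Ioo_eq_iUnion_Icc hab]

lemma IsOpenArc.measurableSet {I : Set ℂ} (hI : IsOpenArc I) : MeasurableSet I := by
  obtain ⟨c, d, -, rfl⟩ := hI.exists_eq_iUnion_image_Icc
  exact .iUnion fun k => (isCompact_Icc.image (continuous_circleMap 0 1)).isClosed.measurableSet

lemma IsHCarleson.inter_image_Icc {h : ℝ → ℝ} {A : Set ℂ} (hA : IsHCarleson h A) {c d : ℝ}
    (hcd : c ≤ d) (hd : d < c + 2 * π) : IsHCarleson h (A ∩ circleMap 0 1 '' Icc c d) := by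
  obtain ⟨hAT, hAcl, L, hLc, hLarc, hLeq, hLsum⟩ := hA
  set ℓ₀ := circleMap 0 1 '' Ioo d (c + 2 * π)
  refine ⟨inter_subset_left.trans hAT,
    hAcl.inter (isCompact_Icc.image (continuous_circleMap 0 1)).isClosed,
    insert ℓ₀ L, hLc.insert ℓ₀, ?_, ?_, ?_⟩
  · rintro ℓ (rfl | hℓ)
    · exact ⟨d, c + 2 * π, hd, by linarith, rfl⟩
    · exact hLarc ℓ hℓ
  · rw [sUnion_insert, ← hLeq, sdiff_inter, union_comm]
    congr 1
    rw [unitCircleSet_eq_range_circleMap, range_circleMap_diff_image_Icc 0 one_ne_zero hcd hd]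
  · set f : Set ℂ → ℝ≥0∞ := fun ℓ => ENNReal.ofReal (h (mC ℓ).toReal)
    refine (lt_of_le_of_lt (ENNReal.tsum_union_le f {ℓ₀} L) ?_).ne
    rw [tsum_singleton ℓ₀ f]
    exact ENNReal.add_lt_top.2 ⟨ENNReal.ofReal_lt_top, hLsum.lt_top⟩

lemma IsHCarleson.exists_seq_iUnion_eq_inter_openArc {h : ℝ → ℝ} {A I : Set ℂ}
    (hA : IsHCarleson h A) (hI : IsOpenArc I) :
    ∃ B : ℕ → Set ℂ, (∀ k, IsHCarleson h (B k) ∧ B k ⊆ A ∩ I) ∧ ⋃ k, B k = A ∩ I := by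
  obtain ⟨c, d, hcd, rfl⟩ := hI.exists_eq_iUnion_image_Icc
  refine ⟨fun k => A ∩ circleMap 0 1 '' Icc (c k) (d k),
    fun k => ⟨hA.inter_image_Icc (hcd k).1 (hcd k).2, inter_subset_inter_right A ?_⟩,
    inter_iUnion A _ |>.symm⟩
  exact subset_iUnion (fun k => circleMap 0 1 '' Icc (c k) (d k)) k

theorem coreResidualDecomp_inter_arc_general
    (h : ℝ → ℝ) (E core res I : Set ℂ)
    (hI : IsOpenArc I)
    (hcr : IsCoreResidualDecomp h E core res) :
    IsCoreResidualDecomp h (I ∩ E) (I ∩ core) (I ∩ res) := by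
  obtain ⟨hcore, hres, hdisj, ⟨N, hN, rfl⟩, hmax, G, hG, hGcore⟩ := hcr
  refine ⟨hI.measurableSet.inter hcore, hI.measurableSet.inter hres,
    hdisj.mono inter_subset_right inter_subset_right,
    ⟨N, hN, by rw [← inter_sdiff_assoc, inter_union_distrib_left]⟩, fun A hA hAE => ?_, ?_⟩
  · rw [sdiff_inter]
    exact measure_union_null (measure_mono_null (sdiff_subset_sdiff_right inter_subset_left) hAE)
      (hmax A hA (measure_mono_null (sdiff_subset_sdiff_right inter_subset_right) hAE))
  · choose B hB hBG using fun n => (hG n).1.exists_seq_iUnion_eq_inter_openArc hI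
    have hBunion : ⋃ m : ℕ, B m.unpair.1 m.unpair.2 = I ∩ ⋃ n, G n :=
      calc ⋃ m : ℕ, B m.unpair.1 m.unpair.2 = ⋃ (n) (k), B n k := iSup_unpair B
        _ = I ∩ ⋃ n, G n := by rw [inter_comm, iUnion_inter]; exact iUnion_congr hBG
    refine ⟨fun m => B m.unpair.1 m.unpair.2, fun m => ?_, ?_⟩
    · obtain ⟨hBcarl, hBsub⟩ := hB m.unpair.1 m.unpair.2
      refine ⟨hBcarl, measure_mono_null (fun x hx => ?_) (hG m.unpair.1).2⟩
      exact ⟨(hBsub hx.1).1, fun hxE => hx.2 ⟨(hBsub hx.1).2, hxE⟩⟩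
    · rw [hBunion]
      show mC (symmDiff (I ∩ core) (I ∩ ⋃ n, G n)) = 0
      rw [← inter_symmDiff_distrib_left]
      exact measure_mono_null inter_subset_right hGcore

/-- The core-residual decomposition localizes to arcs: if
`(core, res)` is a core-residual decomposition of `E` with respect to `h` and `I` is an
arc, then `(I ∩ core, I ∩ res)` is a core-residual decomposition of `I ∩ E` with respect
to `h`; i.e. `core_h(I ∩ E) = I ∩ core_h(E)` and `res_h(I ∩ E) = I ∩ res_h(E)` up to
null sets (by uniqueness of the decomposition). -/
theorem coreResidualDecomp_inter_arc
    (h : ℝ → ℝ) (hh : IsMeasureFunction h) (E core res I : Set ℂ)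
    (hE : MeasurableSet E) (hEsub : E ⊆ unitCircleSet) (hI : IsOpenArc I)
    (hcr : IsCoreResidualDecomp h E core res) :
    IsCoreResidualDecomp h (I ∩ E) (I ∩ core) (I ∩ res) :=
  coreResidualDecomp_inter_arc_general h E core res I hI hcr
end
end

section
/- Let F be a measurable subset of an arc I of 𝕋 and let ε > 0. Then there exists a closed subset B of I that is almost contained in F (i.e. |B \ F| = 0) such that every arc ℓ complementary to B in I (i.e. every connected component of I \ B) satisfies |ℓ ∩ F| ≤ ε·|ℓ|. -/
open MeasureTheory Set Filter Topology
open scoped ENNReal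

noncomputable section

/-!
Parametrise the arc by `[a, b]` and pull `F` back. With `φ t = |F ∩ [a, t]|` and
`ψ t = ε t - φ t`, let `B` consist of `a` and the points of `[a, b]` outside the shadow of `ψ`
in the sense of Riesz's rising sun lemma, i.e. where `ψ` dominates all its values further right.
At such a point `F` has density at least `ε` on the right, so almost every point of `B` lies
in `F` by Lebesgue's density theorem; across a gap `(c, d)` of `B` one has `ψ c ≤ ψ d`, which
is `|F ∩ (c, d)| ≤ ε (d - c)`. On an open interval of length at most `2π`, `circleMap 0 1` is a
homeomorphism onto its image and carries Lebesgue measure to `2π · m`, so both properties pass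
to the circle.
-/

open Complex
open scoped Real

section Order

variable {α : Type*} [ConditionallyCompleteLinearOrder α] [TopologicalSpace α] [OrderTopology α]

theorem IsClosed.exists_Ioo_mem_disjoint {B : Set α} (hB : IsClosed B) {t : α} (ht : t ∉ B)
    (hlo : ∃ x ∈ B, x ≤ t) (hhi : ∃ y ∈ B, t ≤ y) :
    ∃ c ∈ B, ∃ d ∈ B, t ∈ Ioo c d ∧ Disjoint (Ioo c d) B := by
  obtain ⟨x, hxB, hxt⟩ := hlo
  obtain ⟨y, hyB, hty⟩ := hhi
  have hc : sSup (B ∩ Iic t) ∈ B ∩ Iic t :=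
    (hB.inter isClosed_Iic).csSup_mem ⟨x, hxB, hxt⟩ ⟨t, fun _ h => h.2⟩
  have hd : sInf (B ∩ Ici t) ∈ B ∩ Ici t :=
    (hB.inter isClosed_Ici).csInf_mem ⟨y, hyB, hty⟩ ⟨t, fun _ h => h.2⟩
  refine ⟨_, hc.1, _, hd.1, ⟨lt_of_le_of_ne hc.2 (ne_of_mem_of_not_mem hc.1 ht),
    lt_of_le_of_ne' hd.2 (ne_of_mem_of_not_mem hd.1 ht)⟩, ?_⟩
  refine Set.disjoint_left.2 fun z ⟨hcz, hzd⟩ hzB => ?_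
  rcases le_total z t with hzt | htz
  · exact hcz.not_ge (le_csSup ⟨t, fun _ h => h.2⟩ ⟨hzB, hzt⟩)
  · exact hzd.not_ge (csInf_le ⟨t, fun _ h => h.2⟩ ⟨hzB, htz⟩)

theorem connectedComponentIn_eq_Ioo [DenselyOrdered α] {s : Set α} {c d t : α}
    (hc : c ∉ s) (hd : d ∉ s) (hsub : Ioo c d ⊆ s) (ht : t ∈ Ioo c d) :
    connectedComponentIn s t = Ioo c d := by
  refine Subset.antisymm (fun y hy => ?_) (isPreconnected_Ioo.subset_connectedComponentIn ht hsub)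
  have hord := (isPreconnected_connectedComponentIn (F := s) (x := t)).ordConnected
  have htC := mem_connectedComponentIn (hsub ht)
  have hCs := connectedComponentIn_subset s t
  by_contra hyI
  rcases not_and_or.1 hyI with hyc | hyd
  · exact hc (hCs (hord.out hy htC ⟨not_lt.1 hyc, ht.1.le⟩))
  · exact hd (hCs (hord.out htC hy ⟨ht.2.le, not_lt.1 hyd⟩))

end Order

theorem Set.LeftInvOn.image_connectedComponentIn {α β : Type*} [TopologicalSpace α]
    [TopologicalSpace β] {f : α → β} {g : β → α} {s : Set α} (hgf : LeftInvOn g f s)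
    (hf : ContinuousOn f s) (hg : ContinuousOn g (f '' s)) {x : α} (hx : x ∈ s) :
    f '' connectedComponentIn s x = connectedComponentIn (f '' s) (f x) := by
  refine (hf.image_connectedComponentIn_subset hx).antisymm fun y hy => ?_
  have hgC := hg.image_connectedComponentIn_subset (mem_image_of_mem f hx)
  rw [hgf.image_image, hgf hx] at hgC
  rw [← hgf.rightInvOn_image (connectedComponentIn_subset _ _ hy)]
  exact mem_image_of_mem f (hgC (mem_image_of_mem g hy))

section DistributionFunction

variable {G : Set ℝ}

theorem measure_inter_Iic_toReal_sub (hG : volume G ≠ ∞) {c d : ℝ} (hcd : c ≤ d) :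
    (volume (G ∩ Iic d)).toReal - (volume (G ∩ Iic c)).toReal =
      (volume (G ∩ Ioc c d)).toReal := by
  have hsplit := measure_inter_add_sdiff (μ := volume) (G ∩ Iic d) (measurableSet_Iic (a := c))
  have hIoc : Iic d \ Iic c = Ioc c d := by ext; simp [and_comm]
  rw [inter_assoc, Iic_inter_Iic, min_eq_right hcd, sdiff_eq, inter_assoc, ← sdiff_eq,
    hIoc] at hsplit
  rw [← hsplit, ENNReal.toReal_add (measure_ne_top_of_subset inter_subset_left hG)
    (measure_ne_top_of_subset inter_subset_left hG)]
  ring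

theorem lipschitzWith_measure_inter_Iic_toReal (hG : volume G ≠ ∞) :
    LipschitzWith 1 fun t => (volume (G ∩ Iic t)).toReal := by
  refine LipschitzWith.of_le_add fun x y => ?_
  rw [Real.dist_eq]
  rcases le_total x y with hxy | hyx
  · have := measure_inter_Iic_toReal_sub hG hxy
    linarith [ENNReal.toReal_nonneg (a := volume (G ∩ Ioc x y)), abs_nonneg (x - y)]
  · have hle : (volume (G ∩ Ioc y x)).toReal ≤ x - y := by
      rw [← ENNReal.toReal_ofReal (sub_nonneg.2 hyx), ← Real.volume_Ioc]
      exact ENNReal.toReal_mono measure_Ioc_lt_top.ne (measure_mono inter_subset_right)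
    have := measure_inter_Iic_toReal_sub hG hyx
    linarith [le_abs_self (x - y)]

end DistributionFunction

section RisingSun

variable {α β : Type*} [ConditionallyCompleteLinearOrder α] [LinearOrder β] {ψ : α → β} {a b : α}

def unshadowedSet (ψ : α → β) (a b : α) : Set α := {s ∈ Icc a b | ∀ r ∈ Ioc s b, ψ r ≤ ψ s}

theorem right_mem_unshadowedSet (hab : a ≤ b) : b ∈ unshadowedSet ψ a b :=
  ⟨right_mem_Icc.2 hab, fun _ hr => absurd hr.2 hr.1.not_ge⟩

theorem apply_le_of_mem_unshadowedSet {s r : α} (hs : s ∈ unshadowedSet ψ a b) (hr : r ∈ Icc s b) :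
    ψ r ≤ ψ s := by
  rcases hr.1.eq_or_lt with rfl | hsr
  · exact le_rfl
  · exact hs.2 r ⟨hsr, hr.2⟩

theorem mem_unshadowedSet_of_isMaxOn {t s : α} (hat : a ≤ t) (hs : s ∈ Icc t b)
    (hmax : IsMaxOn ψ (Icc t b) s) : s ∈ unshadowedSet ψ a b :=
  ⟨⟨hat.trans hs.1, hs.2⟩, fun _ hr => hmax ⟨hs.1.trans hr.1.le, hr.2⟩⟩

variable [TopologicalSpace α] [OrderTopology α] [TopologicalSpace β] [OrderClosedTopology β]

theorem isClosed_unshadowedSet (hψ : Continuous ψ) : IsClosed (unshadowedSet ψ a b) := by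
  have h : unshadowedSet ψ a b = Icc a b ∩ ⋂ r ∈ Iic b, {s | s < r → ψ r ≤ ψ s} := by
    ext s
    simp only [unshadowedSet, mem_Ioc, and_imp, mem_inter_iff, mem_iInter, mem_Iic, mem_ofPred_eq]
    exact and_congr_right fun _ => forall_congr' fun _ => imp.swap
  rw [h]
  exact isClosed_Icc.inter <| isClosed_biInter fun r _ =>
    isClosed_imp isOpen_Iio (isClosed_le continuous_const hψ)

theorem apply_le_of_disjoint_unshadowedSet [DenselyOrdered α] (hψ : Continuous ψ) {c d : α}
    (hac : a ≤ c) (hcd : c < d) (hd : d ∈ unshadowedSet ψ a b)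
    (hgap : Disjoint (Ioo c d) (unshadowedSet ψ a b)) : ψ c ≤ ψ d := by
  have hIoo : ∀ t ∈ Ioo c d, ψ t ≤ ψ d := by
    intro t ht
    have htb : t ≤ b := ht.2.le.trans hd.1.2
    obtain ⟨s, hs, hmax⟩ := isCompact_Icc.exists_isMaxOn (nonempty_Icc.2 htb) hψ.continuousOn
    have hsU := mem_unshadowedSet_of_isMaxOn (hac.trans ht.1.le) hs hmax
    have hds : d ≤ s := not_lt.1 fun hsd => disjoint_left.1 hgap ⟨ht.1.trans_le hs.1, hsd⟩ hsU
    exact (hmax (left_mem_Icc.2 htb)).trans (apply_le_of_mem_unshadowedSet hd ⟨hds, hs.2⟩)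
  have hc : c ∈ closure (Ioo c d) := by rw [closure_Ioo hcd.ne]; exact left_mem_Icc.2 hcd.le
  exact closure_minimal hIoo (isClosed_le hψ continuous_const) hc

end RisingSun

theorem Real.ae_mem_of_frequently_le_measure_inter_Ioc {G : Set ℝ} (hG : MeasurableSet G) {ε : ℝ}
    (hε : 0 < ε) :
    ∀ᵐ s, (∃ᶠ r in 𝓝[>] 0, ENNReal.ofReal (ε * r) ≤ volume (G ∩ Ioc s (s + r))) → s ∈ G := by
  filter_upwards [Besicovitch.ae_tendsto_measure_inter_div_of_measurableSet volume hG]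
    with s hdensity hfreq
  by_contra hsG
  rw [indicator_of_notMem hsG] at hdensity
  have hsmall := (hdensity.eventually (gt_mem_nhds (ENNReal.ofReal_pos.2 (half_pos hε)))).and
    self_mem_nhdsWithin
  obtain ⟨r, hr, hratio, hr0 : 0 < r⟩ := (hfreq.and_eventually hsmall).exists
  refine hratio.not_ge ?_
  calc ENNReal.ofReal (ε / 2) = ENNReal.ofReal (ε * r) / ENNReal.ofReal (2 * r) := by
        rw [← ENNReal.ofReal_div_of_pos (by positivity)]
        congr 1
        field_simp [hr0.ne']
    _ ≤ volume (G ∩ Metric.closedBall s r) / volume (Metric.closedBall s r) := by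
        rw [Real.volume_closedBall]
        refine ENNReal.div_le_div_right (hr.trans (measure_mono (inter_subset_inter_right _ ?_))) _
        rw [Real.closedBall_eq_Icc]
        exact Ioc_subset_Icc_self.trans (Icc_subset_Icc (by linarith) le_rfl)

theorem measure_unshadowedSet_sdiff_eq_zero {G : Set ℝ} (hG : MeasurableSet G)
    (hGfin : volume G ≠ ∞) {ε : ℝ} (hε : 0 < ε) (a b : ℝ) :
    volume (unshadowedSet (fun t => ε * t - (volume (G ∩ Iic t)).toReal) a b \ G) = 0 := by
  refine measure_mono_null (fun s ⟨hsU, hsG⟩ => ?_) (measure_union_null (measure_singleton b)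
    (ae_iff.1 (Real.ae_mem_of_frequently_le_measure_inter_Ioc hG hε)))
  rcases hsU.1.2.eq_or_lt with rfl | hsb
  · exact Or.inl rfl
  refine Or.inr fun h => hsG (h (Eventually.frequently ?_))
  filter_upwards [Ioo_mem_nhdsGT (sub_pos.2 hsb)] with r hr
  have hψ := apply_le_of_mem_unshadowedSet (r := s + r) hsU ⟨by linarith [hr.1], by linarith [hr.2]⟩
  have hdiff := measure_inter_Iic_toReal_sub hGfin (by linarith [hr.1] : s ≤ s + r)
  exact ENNReal.ofReal_le_of_le_toReal (by linarith)

theorem exists_closed_subset_Icc_almost_contained {a b ε : ℝ} (hab : a ≤ b) (hε : 0 < ε)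
    {F : Set ℝ} (hF : MeasurableSet F) :
    ∃ B ⊆ Icc a b, IsClosed B ∧ a ∈ B ∧ b ∈ B ∧ volume (B \ F) = 0 ∧
      ∀ t ∈ Ioo a b \ B, volume (connectedComponentIn (Ioo a b \ B) t ∩ F) ≤
        ENNReal.ofReal ε * volume (connectedComponentIn (Ioo a b \ B) t) := by
  set G := F ∩ Icc a b
  have hGfin : volume G ≠ ∞ := measure_ne_top_of_subset inter_subset_right measure_Icc_lt_top.ne
  set ψ := fun t => ε * t - (volume (G ∩ Iic t)).toReal
  have hψ : Continuous ψ := (continuous_const.mul continuous_id).sub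
    (lipschitzWith_measure_inter_Iic_toReal hGfin).continuous
  set U := unshadowedSet ψ a b
  have hBsub : insert a U ⊆ Icc a b := insert_subset (left_mem_Icc.2 hab) fun _ hs => hs.1
  have hBclosed : IsClosed (insert a U) := by
    rw [insert_eq]; exact isClosed_singleton.union (isClosed_unshadowedSet hψ)
  refine ⟨insert a U, hBsub, hBclosed, mem_insert a U,
    mem_insert_of_mem a (right_mem_unshadowedSet hab), ?_, ?_⟩
  · refine measure_mono_null (fun s ⟨hsB, hsF⟩ => ?_) (measure_union_null (measure_singleton a)
      (measure_unshadowedSet_sdiff_eq_zero (hF.inter measurableSet_Icc) hGfin hε a b))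
    exact hsB.imp id fun hsU => ⟨hsU, fun hsG => hsF hsG.1⟩
  rintro t ⟨htab, htB⟩
  obtain ⟨c, hcB, d, hdB, htcd, hgap⟩ := hBclosed.exists_Ioo_mem_disjoint htB
    ⟨a, mem_insert a U, htab.1.le⟩ ⟨b, mem_insert_of_mem a (right_mem_unshadowedSet hab), htab.2.le⟩
  have hac : a ≤ c := (hBsub hcB).1
  have hdb : d ≤ b := (hBsub hdB).2
  have hcd : c < d := htcd.1.trans htcd.2
  rw [connectedComponentIn_eq_Ioo (s := Ioo a b \ insert a U) (fun h => h.2 hcB) (fun h => h.2 hdB)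
    (fun y hy => ⟨⟨hac.trans_lt hy.1, hy.2.trans_le hdb⟩, disjoint_left.1 hgap hy⟩) htcd]
  have hdU : d ∈ U := (mem_insert_iff.1 hdB).resolve_left (hac.trans_lt hcd).ne'
  have hψcd :=
    apply_le_of_disjoint_unshadowedSet hψ hac hcd hdU (hgap.mono_right (subset_insert a U))
  have hdiff := measure_inter_Iic_toReal_sub hGfin hcd.le
  calc volume (Ioo c d ∩ F) ≤ volume (G ∩ Ioc c d) :=
        measure_mono fun y ⟨hy, hyF⟩ => ⟨⟨hyF, hac.trans hy.1.le, hy.2.le.trans hdb⟩, hy.1, hy.2.le⟩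
    _ ≤ ENNReal.ofReal (ε * (d - c)) := by
        refine (ENNReal.le_ofReal_iff_toReal_le (measure_ne_top_of_subset inter_subset_left hGfin)
          (by nlinarith)).2 ?_
        simp only [ψ] at hψcd
        linarith
    _ = ENNReal.ofReal ε * volume (Ioo c d) := by rw [Real.volume_Ioo, ENNReal.ofReal_mul hε.le]

theorem mC_apply {T : Set ℂ} (hT : MeasurableSet T) (u : ℝ) :
    mC T = (ENNReal.ofReal (2 * π))⁻¹ * volume (circleMap 0 1 ⁻¹' T ∩ Ioc u (u + 2 * π)) := by
  have hmeas : Measurable (circleMap 0 1) := (continuous_circleMap 0 1).measurable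
  have hwindow := (isAddFundamentalDomain_Ioc Real.two_pi_pos 0).measure_set_eq
    (isAddFundamentalDomain_Ioc Real.two_pi_pos u) (hmeas hT) fun g => ?_
  · rw [zero_add] at hwindow
    rw [mC, Measure.smul_apply, smul_eq_mul, Measure.map_apply hmeas hT,
      Measure.restrict_apply (hmeas hT), hwindow]
  obtain ⟨k, hk⟩ := AddSubgroup.mem_zmultiples_iff.1 g.2
  ext x
  simp only [mem_preimage, AddSubgroup.vadd_def, vadd_eq_add, ← hk, add_comm _ x,
    (periodic_circleMap 0 1).zsmul k x]

theorem injOn_circleMap_Ioc (u : ℝ) : InjOn (circleMap 0 1) (Ioc u (u + 2 * π)) := by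
  have h := injOn_circleMap_of_abs_sub_le (c := 0) one_ne_zero (a := u) (b := u + 2 * π)
    (by simp [abs_of_pos Real.pi_pos])
  rwa [uIoc_of_le (by linarith [Real.pi_pos])] at h

theorem mC_image {S : Set ℝ} (hS : MeasurableSet S) {u : ℝ} (hSu : S ⊆ Ioc u (u + 2 * π)) :
    mC (circleMap 0 1 '' S) = (ENNReal.ofReal (2 * π))⁻¹ * volume S := by
  have hinj := injOn_circleMap_Ioc u
  rw [mC_apply (hS.image_of_continuousOn_injOn (continuous_circleMap 0 1).continuousOn
    (hinj.mono hSu)) u, hinj.preimage_image_inter hSu]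

theorem mC_image_eq_zero {S : Set ℝ} (hS : volume S = 0) : mC (circleMap 0 1 '' S) = 0 := by
  have hwindow : ∀ x : ℝ, ∃ n : ℤ, x ∈ Ioc (n • (2 * π)) (n • (2 * π) + 2 * π) := fun x =>
    ⟨toIocDiv Real.two_pi_pos 0 x, by
      have h := toIocMod_mem_Ioc Real.two_pi_pos 0 x
      rw [← self_sub_toIocDiv_zsmul] at h
      constructor <;> linarith [h.1, h.2]⟩
  refine measure_mono_null (t := ⋃ n : ℤ,
    circleMap 0 1 '' (toMeasurable volume S ∩ Ioc (n • (2 * π)) (n • (2 * π) + 2 * π))) ?_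
    (measure_iUnion_null fun n => ?_)
  · rintro _ ⟨x, hx, rfl⟩
    obtain ⟨n, hn⟩ := hwindow x
    exact mem_iUnion.2 ⟨n, x, ⟨subset_toMeasurable volume S hx, hn⟩, rfl⟩
  · rw [mC_image ((measurableSet_toMeasurable _ _).inter measurableSet_Ioc) inter_subset_right,
      measure_mono_null inter_subset_left (by rwa [measure_toMeasurable]), mul_zero]

theorem circleMap_zero_one_div (t m : ℝ) :
    circleMap 0 1 t / circleMap 0 1 m = circleMap 0 1 (t - m) := by
  simp only [circleMap_zero, ofReal_one, one_mul, ← Complex.exp_sub, ofReal_sub, sub_mul]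

theorem arg_circleMap_zero_one {θ : ℝ} (hθ : θ ∈ Ioc (-π) π) : arg (circleMap 0 1 θ) = θ := by
  rw [circleMap_zero, ofReal_one, one_mul, arg_exp_mul_I, toIocMod_eq_self]
  simpa [show -π + 2 * π = π by ring] using hθ

def circleMapLocalInv (m : ℝ) (z : ℂ) : ℝ := m + arg (z / circleMap 0 1 m)

theorem circleMapLocalInv_circleMap {m t : ℝ} (ht : t ∈ Ioc (m - π) (m + π)) :
    circleMapLocalInv m (circleMap 0 1 t) = t := by
  rw [circleMapLocalInv, circleMap_zero_one_div,
    arg_circleMap_zero_one ⟨by linarith [ht.1], by linarith [ht.2]⟩, add_sub_cancel]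

theorem continuousOn_circleMapLocalInv (m : ℝ) :
    ContinuousOn (circleMapLocalInv m) (circleMap 0 1 '' Ioo (m - π) (m + π)) := by
  rintro _ ⟨t, ht, rfl⟩
  refine (continuousAt_const.add ((continuousAt_arg ?_).comp
    (continuous_id.div_const _).continuousAt)).continuousWithinAt
  rw [id, circleMap_zero_one_div, mem_slitPlane_iff_arg,
    arg_circleMap_zero_one ⟨by linarith [ht.1], by linarith [ht.2]⟩]
  exact ⟨by linarith [ht.2], circleMap_ne_center one_ne_zero⟩

theorem image_connectedComponentIn_circleMap {m : ℝ} {S : Set ℝ}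
    (hS : S ⊆ Ioo (m - π) (m + π)) {t : ℝ} (ht : t ∈ S) :
    circleMap 0 1 '' connectedComponentIn S t =
      connectedComponentIn (circleMap 0 1 '' S) (circleMap 0 1 t) :=
  LeftInvOn.image_connectedComponentIn
    (fun _ hx => circleMapLocalInv_circleMap (Ioo_subset_Ioc_self (hS hx)))
    (continuous_circleMap 0 1).continuousOn
    ((continuousOn_circleMapLocalInv m).mono (image_mono hS)) ht

theorem circleMap_image_Icc_sdiff {a b : ℝ} (hba : b - a ≤ 2 * π) {B : Set ℝ} (hB : B ⊆ Icc a b)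
    (ha : a ∈ B) (hb : b ∈ B) :
    circleMap 0 1 '' Icc a b \ circleMap 0 1 '' B = circleMap 0 1 '' (Ioo a b \ B) := by
  have hinj : ∀ x ∈ Ioo a b, ∀ y ∈ Icc a b, circleMap 0 1 x = circleMap 0 1 y → x = y :=
    fun x hx y hy => eq_of_circleMap_eq one_ne_zero
      (abs_sub_lt_iff.2 ⟨by linarith [hx.2, hy.1], by linarith [hx.1, hy.2]⟩)
  ext z
  constructor
  · rintro ⟨⟨x, hx, rfl⟩, hxB⟩
    have hxB' : x ∉ B := fun h => hxB ⟨x, h, rfl⟩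
    exact ⟨x, ⟨⟨hx.1.lt_of_ne (ne_of_mem_of_not_mem ha hxB'),
      hx.2.lt_of_ne (ne_of_mem_of_not_mem hb hxB').symm⟩, hxB'⟩, rfl⟩
  · rintro ⟨x, ⟨hx, hxB⟩, rfl⟩
    exact ⟨⟨x, Ioo_subset_Icc_self hx, rfl⟩,
      fun ⟨y, hy, hyx⟩ => hxB (hinj x hx y (hB hy) hyx.symm ▸ hy)⟩

theorem exists_closed_almost_contained_general
    (I F : Set ℂ) (hI : IsClosedArc I) (hF : MeasurableSet F)
    (ε : ℝ) (hε : 0 < ε) :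
    ∃ B : Set ℂ, IsClosed B ∧ B ⊆ I ∧ mC (B \ F) = 0 ∧
      ∀ x ∈ I \ B,
        mC (connectedComponentIn (I \ B) x ∩ F) ≤
          ENNReal.ofReal ε * mC (connectedComponentIn (I \ B) x) := by
  obtain ⟨a, b, hab, hba, rfl⟩ := hI
  have hF' : MeasurableSet (circleMap 0 1 ⁻¹' F) :=
    hF.preimage (continuous_circleMap 0 1).measurable
  obtain ⟨B, hBsub, hBclosed, haB, hbB, hBF, hcomp⟩ :=
    exists_closed_subset_Icc_almost_contained hab.le hε hF'
  refine ⟨circleMap 0 1 '' B, ((isCompact_Icc.of_isClosed_subset hBclosed hBsub).image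
    (continuous_circleMap 0 1)).isClosed, image_mono hBsub, ?_, ?_⟩
  · rw [← image_sdiff_preimage]
    exact mC_image_eq_zero hBF
  rw [circleMap_image_Icc_sdiff hba hBsub haB hbB]
  rintro _ ⟨t, ht, rfl⟩
  have hS : Ioo a b \ B ⊆ Ioo (a + π - π) (a + π + π) :=
    fun x hx => ⟨by linarith [hx.1.1], by linarith [hx.1.2]⟩
  rw [← image_connectedComponentIn_circleMap hS ht]
  set C := connectedComponentIn (Ioo a b \ B) t
  have hC : MeasurableSet C := isPreconnected_connectedComponentIn.ordConnected.measurableSet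
  have hCu : C ⊆ Ioc a (a + 2 * π) := fun x hx =>
    have hx' := (connectedComponentIn_subset _ _ hx).1
    ⟨hx'.1, by linarith [hx'.2]⟩
  rw [← image_inter_preimage, mC_image (hC.inter hF') (inter_subset_left.trans hCu),
    mC_image hC hCu, mul_left_comm]
  exact mul_le_mul_right (hcomp t ht) _

/-- Let `F` be a measurable subset of an arc `I` and `ε > 0`. Then
there is a closed subset `B` of `I`, almost contained in `F`, such that every connected
component `ℓ` of `I \ B` satisfies `|ℓ ∩ F| ≤ ε |ℓ|`. -/
theorem exists_closed_almost_contained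
    (I F : Set ℂ) (hI : IsClosedArc I) (hF : MeasurableSet F) (hFI : F ⊆ I)
    (ε : ℝ) (hε : 0 < ε) :
    ∃ B : Set ℂ, IsClosed B ∧ B ⊆ I ∧ mC (B \ F) = 0 ∧
      ∀ x ∈ I \ B,
        mC (connectedComponentIn (I \ B) x ∩ F) ≤
          ENNReal.ofReal ε * mC (connectedComponentIn (I \ B) x) :=
  exists_closed_almost_contained_general I F hI hF ε hε
end
end
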